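/- arXiv:2007.02786 — 7 statements merged into one kernel-verified Lean document; each statement's English description precedes it below -/
import Mathlib

section
/- Let H be an n×n real matrix (n ≥ 1) admitting two regular splittings H = B₁ - C₁ and H = B₂ - C₂. If H is invertible, every entry of H⁻¹ is nonnegative, and 0 ≤ C₂ ≤ C₁ entrywise, then 0 ≤ ρ(B₂⁻¹ C₂) ≤ ρ(B₁⁻¹ C₁) < 1. -/
/-!
For a regular splitting `H = B - C` with `H⁻¹ ≥ 0` put `T = B⁻¹C` and `G = H⁻¹C`; then
`G = (1 + G) T` and `(1 - T) G = T`. Taking `w = |v|` for an eigenvector `v` of `T` whose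
eigenvalue has modulus `ρ(T)` gives `w ≥ 0` with `T w ≥ ρ(T) w`, hence
`(1 - ρ(T)) G w ≥ ρ(T) w`. This forces `ρ(T) < 1` and, by the Collatz–Wielandt bound (a
consequence of Gelfand's formula), `ρ(G) ≥ ρ(T) / (1 - ρ(T))`. Conversely each eigenvalue `μ`
of `G` gives the eigenvalue `μ / (1 + μ)` of `T`, so `ρ(G) = ρ(T) / (1 - ρ(T))`. Finally
`0 ≤ H⁻¹C₂ ≤ H⁻¹C₁`, the spectral radius is monotone on nonnegative matrices, and
`x ↦ x / (1 - x)` is increasing on `[0, 1)`.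
-/

open Matrix

/-- Spectral radius of a real square matrix: the maximum of `|μ|` over all complex
eigenvalues `μ` of the matrix (elements of the spectrum of its complexification). -/
noncomputable def specRad {n : ℕ} (A : Matrix (Fin n) (Fin n) ℝ) : ℝ :=
  sSup {x : ℝ | ∃ μ ∈ spectrum ℂ (A.map (Complex.ofReal ·)), x = ‖μ‖}
/-- `(B, C)` is a regular splitting of `H`: `H = B - C`, `B` is invertible,
every entry of `B⁻¹` is nonnegative, and every entry of `C` is nonnegative. -/
def IsRegularSplitting {n : ℕ} (H B C : Matrix (Fin n) (Fin n) ℝ) : Prop :=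
  H = B - C ∧ IsUnit B ∧ (∀ i j, 0 ≤ B⁻¹ i j) ∧ (∀ i j, 0 ≤ C i j)

open Filter

theorem spectrum.ofReal_le_spectralRadius_of_pow_le_norm_pow {A : Type*} [NormedRing A]
    [NormedAlgebra ℂ A] [CompleteSpace A] {a : A} {s : ℝ} (h : ∀ k : ℕ, s ^ k ≤ ‖a ^ k‖) :
    ENNReal.ofReal s ≤ spectralRadius ℂ a := by
  rcases le_or_gt s 0 with hs | hs
  · simp [ENNReal.ofReal_of_nonpos hs]
  refine ge_of_tendsto (spectrum.pow_norm_pow_one_div_tendsto_nhds_spectralRadius a) ?_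
  filter_upwards [eventually_gt_atTop 0] with k hk
  gcongr
  rw [one_div, Real.le_rpow_inv_iff_of_pos hs.le (norm_nonneg _) (by positivity),
    Real.rpow_natCast]
  exact h k

theorem Matrix.mem_spectrum_iff_exists_mulVec_eq_smul {ι K : Type*} [Fintype ι] [DecidableEq ι]
    [Field K] {A : Matrix ι ι K} {μ : K} : μ ∈ spectrum K A ↔ ∃ v ≠ 0, A *ᵥ v = μ • v := by
  rw [← Matrix.spectrum_toLin', ← Module.End.hasEigenvalue_iff_mem_spectrum]
  constructor
  · intro h
    obtain ⟨v, hv⟩ := h.exists_hasEigenvector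
    exact ⟨v, hv.2, hv.apply_eq_smul⟩
  · rintro ⟨v, hv, h⟩
    exact Module.End.hasEigenvalue_of_hasEigenvector ⟨Module.End.mem_eigenspace_iff.mpr h, hv⟩

theorem spectrum.nnnorm_le_spectralRadius {𝕜 A : Type*} [NormedField 𝕜] [Ring A] [Algebra 𝕜 A]
    {a : A} {μ : 𝕜} (hμ : μ ∈ spectrum 𝕜 a) : (‖μ‖₊ : ENNReal) ≤ spectralRadius 𝕜 a :=
  le_iSup₂ (f := fun z (_ : z ∈ spectrum 𝕜 a) => (‖z‖₊ : ENNReal)) μ hμ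

section Nonneg

variable {ι : Type*} [Fintype ι] {A B : Matrix ι ι ℝ}

theorem Matrix.mul_apply_nonneg (hA : ∀ i j, 0 ≤ A i j) (hB : ∀ i j, 0 ≤ B i j) (i j : ι) :
    0 ≤ (A * B) i j :=
  Finset.sum_nonneg fun l _ => mul_nonneg (hA i l) (hB l j)

theorem Matrix.mul_apply_le_mul_apply_of_nonneg_left {C : Matrix ι ι ℝ} (hA : ∀ i j, 0 ≤ A i j)
    (hBC : ∀ i j, B i j ≤ C i j) (i j : ι) : (A * B) i j ≤ (A * C) i j :=
  Finset.sum_le_sum fun l _ => mul_le_mul_of_nonneg_left (hBC l j) (hA i l)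

theorem Matrix.mulVec_nonneg (hA : ∀ i j, 0 ≤ A i j) {v : ι → ℝ} (hv : 0 ≤ v) : 0 ≤ A *ᵥ v :=
  fun i => dotProduct_nonneg_of_nonneg (fun j => hA i j) hv

theorem Matrix.mulVec_le_mulVec_of_nonneg (hA : ∀ i j, 0 ≤ A i j) {u v : ι → ℝ} (huv : u ≤ v) :
    A *ᵥ u ≤ A *ᵥ v :=
  fun i => dotProduct_le_dotProduct_of_nonneg_left huv fun j => hA i j

theorem Matrix.mulVec_le_mulVec_of_le (hAB : ∀ i j, A i j ≤ B i j) {v : ι → ℝ} (hv : 0 ≤ v) :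
    A *ᵥ v ≤ B *ᵥ v :=
  fun i => dotProduct_le_dotProduct_of_nonneg_right (fun j => hAB i j) hv

theorem Matrix.pow_smul_le_pow_mulVec [DecidableEq ι] (hA : ∀ i j, 0 ≤ A i j) {s : ℝ} (hs : 0 ≤ s)
    {w : ι → ℝ} (h : s • w ≤ A *ᵥ w) (k : ℕ) : s ^ k • w ≤ (A ^ k) *ᵥ w := by
  induction k with
  | zero => simp
  | succ k ih =>
    calc s ^ (k + 1) • w = s ^ k • (s • w) := by rw [pow_succ, mul_smul]
      _ ≤ s ^ k • (A *ᵥ w) := smul_le_smul_of_nonneg_left h (pow_nonneg hs k)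
      _ = A *ᵥ (s ^ k • w) := (mulVec_smul A (s ^ k) w).symm
      _ ≤ A *ᵥ ((A ^ k) *ᵥ w) := mulVec_le_mulVec_of_nonneg hA ih
      _ = (A ^ (k + 1)) *ᵥ w := by rw [mulVec_mulVec, pow_succ']

end Nonneg

section SpecRad

-- The spectral radius does not depend on the norm; the `ℓ∞` operator norm is the one
-- compatible with the sup norm on vectors.
attribute [local instance] Matrix.linftyOpNormedAddCommGroup Matrix.linftyOpNormedRing
  Matrix.linftyOpNormedAlgebra

variable {n : ℕ}

theorem Matrix.linfty_opNorm_map_ofReal {ι : Type*} [Fintype ι] (A : Matrix ι ι ℝ) :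
    ‖A.map Complex.ofReal‖ = ‖A‖ := by
  simp [linfty_opNorm_def, Complex.nnnorm_real]

theorem isGreatest_specRad [NeZero n] (A : Matrix (Fin n) (Fin n) ℝ) :
    IsGreatest {x : ℝ | ∃ μ ∈ spectrum ℂ (A.map Complex.ofReal), x = ‖μ‖} (specRad A) := by
  obtain ⟨μ, hμ, hρ⟩ := spectrum.exists_nnnorm_eq_spectralRadius (A.map Complex.ofReal)
  have hmax : IsGreatest {x : ℝ | ∃ μ ∈ spectrum ℂ (A.map Complex.ofReal), x = ‖μ‖} ‖μ‖ := by
    refine ⟨⟨μ, hμ, rfl⟩, ?_⟩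
    rintro _ ⟨ν, hν, rfl⟩
    exact_mod_cast hρ ▸ spectrum.nnnorm_le_spectralRadius hν
  rwa [specRad, hmax.csSup_eq]

theorem specRad_nonneg [NeZero n] (A : Matrix (Fin n) (Fin n) ℝ) : 0 ≤ specRad A := by
  obtain ⟨μ, -, h⟩ := (isGreatest_specRad A).1
  exact h ▸ norm_nonneg μ

theorem norm_le_specRad [NeZero n] {A : Matrix (Fin n) (Fin n) ℝ} {μ : ℂ}
    (hμ : μ ∈ spectrum ℂ (A.map Complex.ofReal)) : ‖μ‖ ≤ specRad A :=
  (isGreatest_specRad A).2 ⟨μ, hμ, rfl⟩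

theorem ofReal_specRad [NeZero n] (A : Matrix (Fin n) (Fin n) ℝ) :
    ENNReal.ofReal (specRad A) = spectralRadius ℂ (A.map Complex.ofReal) := by
  obtain ⟨μ, hμ, hρ⟩ := spectrum.exists_nnnorm_eq_spectralRadius (A.map Complex.ofReal)
  obtain ⟨ν, hν, hA⟩ := (isGreatest_specRad A).1
  have : specRad A = ‖μ‖ := by
    refine le_antisymm ?_ (norm_le_specRad hμ)
    rw [hA]
    exact_mod_cast hρ ▸ spectrum.nnnorm_le_spectralRadius hν
  rw [this, ← hρ, ofReal_norm, enorm_eq_nnnorm]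

theorem le_specRad_of_smul_le_mulVec {A : Matrix (Fin n) (Fin n) ℝ} (hA : ∀ i j, 0 ≤ A i j)
    {w : Fin n → ℝ} (hw₀ : 0 ≤ w) (hw : w ≠ 0) {s : ℝ} (hs : s • w ≤ A *ᵥ w) : s ≤ specRad A := by
  have : NeZero n := ⟨by rintro rfl; exact hw (Subsingleton.elim _ _)⟩
  rcases le_or_gt s 0 with hs₀ | hs₀
  · exact hs₀.trans (specRad_nonneg A)
  rw [← ENNReal.ofReal_le_ofReal_iff (specRad_nonneg A), ofReal_specRad]
  refine spectrum.ofReal_le_spectralRadius_of_pow_le_norm_pow fun k => ?_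
  have hpow : A.map Complex.ofReal ^ k = (A ^ k).map Complex.ofReal :=
    (Matrix.map_pow A Complex.ofRealHom k).symm
  rw [hpow, Matrix.linfty_opNorm_map_ofReal]
  have hsk : 0 ≤ s ^ k := pow_nonneg hs₀.le k
  have hAk : s ^ k • w ≤ (A ^ k) *ᵥ w := Matrix.pow_smul_le_pow_mulVec hA hs₀.le hs k
  refine le_of_mul_le_mul_right ?_ (norm_pos_iff.mpr hw)
  calc s ^ k * ‖w‖ = ‖s ^ k • w‖ := by rw [norm_smul, Real.norm_of_nonneg hsk]
    _ ≤ ‖(A ^ k) *ᵥ w‖ := by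
        refine (pi_norm_le_iff_of_nonneg (norm_nonneg _)).mpr fun i => ?_
        rw [Real.norm_of_nonneg (smul_nonneg hsk hw₀ i)]
        exact (hAk i).trans ((Real.le_norm_self _).trans (norm_le_pi_norm _ i))
    _ ≤ ‖A ^ k‖ * ‖w‖ := Matrix.linfty_opNorm_mulVec _ _

theorem exists_nonneg_specRad_smul_le_mulVec [NeZero n] {A : Matrix (Fin n) (Fin n) ℝ}
    (hA : ∀ i j, 0 ≤ A i j) : ∃ w : Fin n → ℝ, 0 ≤ w ∧ w ≠ 0 ∧ specRad A • w ≤ A *ᵥ w := by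
  obtain ⟨μ, hμ, hμA⟩ := (isGreatest_specRad A).1
  obtain ⟨v, hv, hAv⟩ := Matrix.mem_spectrum_iff_exists_mulVec_eq_smul.mp hμ
  refine ⟨fun i => ‖v i‖, fun i => norm_nonneg _, fun h => hv ?_, fun i => ?_⟩
  · funext i
    exact norm_eq_zero.mp (congrFun h i)
  calc specRad A * ‖v i‖ = ‖∑ j, (A i j : ℂ) * v j‖ := by
        rw [hμA, ← norm_mul, ← smul_eq_mul, ← Pi.smul_apply, ← hAv]
        rfl
    _ ≤ ∑ j, ‖(A i j : ℂ) * v j‖ := norm_sum_le _ _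
    _ = (A *ᵥ fun i => ‖v i‖) i := by
        simp only [norm_mul, Complex.norm_real, Real.norm_of_nonneg (hA _ _)]
        rfl

theorem specRad_mono [NeZero n] {A B : Matrix (Fin n) (Fin n) ℝ} (hA : ∀ i j, 0 ≤ A i j)
    (hAB : ∀ i j, A i j ≤ B i j) : specRad A ≤ specRad B := by
  obtain ⟨w, hw₀, hw, hAw⟩ := exists_nonneg_specRad_smul_le_mulVec hA
  exact le_specRad_of_smul_le_mulVec (fun i j => (hA i j).trans (hAB i j)) hw₀ hw
    (hAw.trans (Matrix.mulVec_le_mulVec_of_le hAB hw₀))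

theorem specRad_le_div_one_sub_of_one_sub_mul_eq [NeZero n] {T G : Matrix (Fin n) (Fin n) ℝ}
    (hTG : (1 - T) * G = T) (hT : specRad T < 1) :
    specRad G ≤ specRad T / (1 - specRad T) := by
  obtain ⟨μ, hμ, hμG⟩ := (isGreatest_specRad G).1
  obtain ⟨u, hu, hGu⟩ := Matrix.mem_spectrum_iff_exists_mulVec_eq_smul.mp hμ
  set T' := T.map Complex.ofReal
  have hTG' : (1 - T') * G.map Complex.ofReal = T' := by
    have := congrArg Complex.ofRealHom.mapMatrix hTG
    rw [map_mul, map_sub, map_one] at this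
    exact this
  have hTu : (1 + μ) • (T' *ᵥ u) = μ • u := by
    have : T' *ᵥ u = μ • u - μ • (T' *ᵥ u) := by
      conv_lhs => rw [← hTG']
      rw [← mulVec_mulVec, hGu, sub_mulVec, one_mulVec, mulVec_smul]
    rw [add_smul, one_smul]
    exact eq_sub_iff_add_eq.mp this
  have hμ₁ : 1 + μ ≠ 0 := by
    intro h
    rw [h, zero_smul, eq_comm, smul_eq_zero] at hTu
    exact hTu.elim (fun h0 => by simp [h0] at h) hu
  have hquot : μ / (1 + μ) ∈ spectrum ℂ T' := by
    refine Matrix.mem_spectrum_iff_exists_mulVec_eq_smul.mpr ⟨u, hu, ?_⟩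
    rw [div_eq_inv_mul, mul_smul, ← hTu, smul_smul, inv_mul_cancel₀ hμ₁, one_smul]
  have hbound : ‖μ‖ ≤ specRad T * (1 + ‖μ‖) := by
    calc ‖μ‖ = ‖μ / (1 + μ)‖ * ‖1 + μ‖ := by rw [← norm_mul, div_mul_cancel₀ μ hμ₁]
      _ ≤ specRad T * (1 + ‖μ‖) := by
        gcongr
        · exact specRad_nonneg T
        · exact norm_le_specRad hquot
        · exact (norm_add_le 1 μ).trans_eq (by rw [norm_one])
  rw [hμG, le_div_iff₀ (sub_pos.mpr hT)]
  linarith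

theorem specRad_lt_one_and_div_le_of_one_add_mul_eq [NeZero n] {T G : Matrix (Fin n) (Fin n) ℝ}
    (hT : ∀ i j, 0 ≤ T i j) (hG : ∀ i j, 0 ≤ G i j) (hGT : (1 + G) * T = G) :
    specRad T < 1 ∧ specRad T / (1 - specRad T) ≤ specRad G := by
  obtain ⟨w, hw₀, hw, hTw⟩ := exists_nonneg_specRad_smul_le_mulVec hT
  set t := specRad T
  have hGw₀ : 0 ≤ G *ᵥ w := Matrix.mulVec_nonneg hG hw₀
  have key : ∀ i, t * w i ≤ (1 - t) * (G *ᵥ w) i := by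
    have h1G : ∀ i j, 0 ≤ (1 + G) i j := fun i j =>
      add_nonneg (by by_cases h : i = j <;> simp [one_apply, h]) (hG i j)
    have : t • w + t • (G *ᵥ w) ≤ G *ᵥ w :=
      calc t • w + t • (G *ᵥ w) = (1 + G) *ᵥ (t • w) := by
            rw [mulVec_smul, add_mulVec, one_mulVec, smul_add]
        _ ≤ (1 + G) *ᵥ (T *ᵥ w) := Matrix.mulVec_le_mulVec_of_nonneg h1G hTw
        _ = G *ᵥ w := by rw [mulVec_mulVec, hGT]
    intro i
    have := this i
    simp only [Pi.add_apply, Pi.smul_apply, smul_eq_mul] at this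
    linarith
  have ht : t < 1 := by
    by_contra! h
    obtain ⟨i, hi⟩ := Function.ne_iff.mp hw
    have hwi : 0 < w i := lt_of_le_of_ne (hw₀ i) (Ne.symm hi)
    have hGwi : 0 ≤ (G *ᵥ w) i := hGw₀ i
    nlinarith [key i, mul_nonneg (sub_nonneg.mpr h) hGwi]
  refine ⟨ht, le_specRad_of_smul_le_mulVec hG hw₀ hw fun i => ?_⟩
  rw [Pi.smul_apply, smul_eq_mul, div_mul_eq_mul_div, div_le_iff₀ (sub_pos.mpr ht)]
  linarith [key i]

end SpecRad

namespace IsRegularSplitting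

variable {n : ℕ} {H B C : Matrix (Fin n) (Fin n) ℝ}

theorem one_add_inv_mul_mul_inv_mul (h : IsRegularSplitting H B C) (hH : IsUnit H) :
    (1 + H⁻¹ * C) * (B⁻¹ * C) = H⁻¹ * C := by
  have hHC : H + C = B := by rw [h.1, sub_add_cancel]
  rw [← nonsing_inv_mul H ((isUnit_iff_isUnit_det H).mp hH), ← mul_add, hHC, mul_assoc,
    ← mul_assoc B, mul_nonsing_inv B ((isUnit_iff_isUnit_det B).mp h.2.1), one_mul]

theorem one_sub_inv_mul_mul_inv_mul (h : IsRegularSplitting H B C) (hH : IsUnit H) :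
    (1 - B⁻¹ * C) * (H⁻¹ * C) = B⁻¹ * C := by
  have hBC : B - C = H := h.1.symm
  rw [← nonsing_inv_mul B ((isUnit_iff_isUnit_det B).mp h.2.1), ← mul_sub, hBC, mul_assoc,
    ← mul_assoc H, mul_nonsing_inv H ((isUnit_iff_isUnit_det H).mp hH), one_mul]

theorem specRad_lt_one_and_div_le [NeZero n] (h : IsRegularSplitting H B C) (hH : IsUnit H)
    (hHinv : ∀ i j, 0 ≤ H⁻¹ i j) :
    specRad (B⁻¹ * C) < 1 ∧
      specRad (B⁻¹ * C) / (1 - specRad (B⁻¹ * C)) ≤ specRad (H⁻¹ * C) :=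
  specRad_lt_one_and_div_le_of_one_add_mul_eq (Matrix.mul_apply_nonneg h.2.2.1 h.2.2.2)
    (Matrix.mul_apply_nonneg hHinv h.2.2.2) (h.one_add_inv_mul_mul_inv_mul hH)

theorem specRad_lt_one [NeZero n] (h : IsRegularSplitting H B C) (hH : IsUnit H)
    (hHinv : ∀ i j, 0 ≤ H⁻¹ i j) : specRad (B⁻¹ * C) < 1 :=
  (h.specRad_lt_one_and_div_le hH hHinv).1

theorem specRad_inv_mul_eq [NeZero n] (h : IsRegularSplitting H B C) (hH : IsUnit H)
    (hHinv : ∀ i j, 0 ≤ H⁻¹ i j) :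
    specRad (H⁻¹ * C) = specRad (B⁻¹ * C) / (1 - specRad (B⁻¹ * C)) :=
  le_antisymm
    (specRad_le_div_one_sub_of_one_sub_mul_eq (h.one_sub_inv_mul_mul_inv_mul hH)
      (h.specRad_lt_one hH hHinv))
    (h.specRad_lt_one_and_div_le hH hHinv).2

end IsRegularSplitting

theorem stmt_2_general {n : ℕ} (hn : 1 ≤ n)
    (H B₁ C₁ B₂ C₂ : Matrix (Fin n) (Fin n) ℝ)
    (h1 : IsRegularSplitting H B₁ C₁) (h2 : IsRegularSplitting H B₂ C₂)
    (hH : IsUnit H) (hHinv : ∀ i j, 0 ≤ H⁻¹ i j)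
    (hle : ∀ i j, C₂ i j ≤ C₁ i j) :
    0 ≤ specRad (B₂⁻¹ * C₂) ∧
    specRad (B₂⁻¹ * C₂) ≤ specRad (B₁⁻¹ * C₁) ∧
    specRad (B₁⁻¹ * C₁) < 1 := by
  have : NeZero n := ⟨by omega⟩
  have hG : specRad (H⁻¹ * C₂) ≤ specRad (H⁻¹ * C₁) :=
    specRad_mono (Matrix.mul_apply_nonneg hHinv h2.2.2.2)
      (Matrix.mul_apply_le_mul_apply_of_nonneg_left hHinv hle)
  have ht₁ := h1.specRad_lt_one hH hHinv
  have ht₂ := h2.specRad_lt_one hH hHinv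
  rw [h1.specRad_inv_mul_eq hH hHinv, h2.specRad_inv_mul_eq hH hHinv,
    div_le_div_iff₀ (sub_pos.mpr ht₂) (sub_pos.mpr ht₁)] at hG
  refine ⟨specRad_nonneg _, by nlinarith, ht₁⟩

/-- Comparison of regular splittings: if `H = B₁ - C₁ = B₂ - C₂` are
regular splittings, `H` is invertible with entrywise-nonnegative inverse, and
`0 ≤ C₂ ≤ C₁` entrywise, then `0 ≤ ρ(B₂⁻¹C₂) ≤ ρ(B₁⁻¹C₁) < 1`. -/
theorem stmt_2 {n : ℕ} (hn : 1 ≤ n)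
    (H B₁ C₁ B₂ C₂ : Matrix (Fin n) (Fin n) ℝ)
    (h1 : IsRegularSplitting H B₁ C₁) (h2 : IsRegularSplitting H B₂ C₂)
    (hH : IsUnit H) (hHinv : ∀ i j, 0 ≤ H⁻¹ i j)
    (hC2nonneg : ∀ i j, 0 ≤ C₂ i j) (hle : ∀ i j, C₂ i j ≤ C₁ i j) :
    0 ≤ specRad (B₂⁻¹ * C₂) ∧
    specRad (B₂⁻¹ * C₂) ≤ specRad (B₁⁻¹ * C₁) ∧
    specRad (B₁⁻¹ * C₁) < 1 :=
  stmt_2_general hn H B₁ C₁ B₂ C₂ h1 h2 hH hHinv hle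
end

section
/- Let H, B₁, B₂ be n×n symmetric positive-definite real matrices (n ≥ 1) such that (B₁, B₁ - H) and (B₂, B₂ - H) are regular splittings of H, every entry of H⁻¹ is nonnegative, and 0 ≤ B₁ - H ≤ B₂ - H entrywise. If in addition the largest eigenvalue of B₂⁻¹H is at least 1, then the ratio of the largest to the smallest eigenvalue of B₁⁻¹H is at most twice the ratio of the largest to the smallest eigenvalue of B₂⁻¹H, i.e. λ_max(B₁⁻¹H)/λ_min(B₁⁻¹H) ≤ 2 · λ_max(B₂⁻¹H)/λ_min(B₂⁻¹H). -/
open Matrix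

/-- The largest real eigenvalue of a real square matrix (supremum of the real points
of the spectrum of its complexification). -/
noncomputable def maxEig {n : ℕ} (A : Matrix (Fin n) (Fin n) ℝ) : ℝ :=
  sSup {x : ℝ | (x : ℂ) ∈ spectrum ℂ (A.map (Complex.ofReal ·))}

/-- The smallest real eigenvalue of a real square matrix (infimum of the real points
of the spectrum of its complexification). -/
noncomputable def minEig {n : ℕ} (A : Matrix (Fin n) (Fin n) ℝ) : ℝ :=
  sInf {x : ℝ | (x : ℂ) ∈ spectrum ℂ (A.map (Complex.ofReal ·))}
/-! Write `Cᵢ = Bᵢ - H`. Since `B⁻¹H = 1 - B⁻¹C` and `H⁻¹B = 1 + H⁻¹C`, where `B⁻¹C` and `H⁻¹C`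
are entrywise nonnegative and similar to symmetric matrices, everything reduces to two
Perron–Frobenius-type facts about such a matrix `M`, both read off from `tr (M ^ k) = ∑ λᵢ ^ k`
as `k → ∞`: its largest eigenvalue dominates `|λ|` for every eigenvalue `λ` (odd `k`), and it is
monotone in `M` entrywise (even `k`). The first gives `λ_max(B₁⁻¹H) ≤ 2`, the second
`λ_min(B₂⁻¹H) ≤ λ_min(B₁⁻¹H)`; with `λ_max(B₂⁻¹H) ≥ 1` this yields the bound. -/

open Filter Finset Topology

lemma le_of_frequently_pow_le_mul_pow {a b c : ℝ} (hb : 0 ≤ b)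
    (h : ∃ᶠ k in atTop, a ^ k ≤ c * b ^ k) : a ≤ b := by
  by_contra! hba
  have ha : 0 < a := hb.trans_lt hba
  have hlim : Tendsto (fun k : ℕ => c * (b / a) ^ k) atTop (𝓝 0) := by
    simpa using (tendsto_pow_atTop_nhds_zero_of_lt_one (div_nonneg hb ha.le)
      ((div_lt_one ha).2 hba)).const_mul c
  obtain ⟨k, hk, hlt⟩ := (h.and_eventually (hlim.eventually (gt_mem_nhds one_pos))).exists
  rw [div_pow, mul_div_assoc', div_lt_one (pow_pos ha k)] at hlt
  linarith

section PowerSums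

variable {ι : Type*} [Fintype ι] {e f : ι → ℝ}

lemma neg_le_iSup_of_sum_odd_pow_nonneg (h : ∀ k, Odd k → 0 ≤ ∑ j, e j ^ k) (i : ι) :
    -e i ≤ ⨆ j, e j := by
  classical
  set r := ⨆ j, e j
  have hle : ∀ j, e j ≤ r := le_ciSup (Set.finite_range e).bddAbove
  suffices hmax : -e i ≤ max r 0 by
    rcases max_cases r 0 with ⟨hr, -⟩ | ⟨hr, -⟩ <;> linarith [hle i]
  refine le_of_frequently_pow_le_mul_pow (c := Fintype.card ι) (le_max_right _ _)
    (frequently_atTop.2 fun k => ⟨2 * k + 1, by omega, ?_⟩)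
  have hodd : Odd (2 * k + 1) := odd_two_mul_add_one k
  have hrest : ∑ j ∈ univ.erase i, e j ^ (2 * k + 1) ≤ Fintype.card ι * max r 0 ^ (2 * k + 1) :=
    calc _ ≤ ∑ j ∈ univ.erase i, max r 0 ^ (2 * k + 1) :=
          sum_le_sum fun j _ => hodd.pow_le_pow.2 ((hle j).trans (le_max_left _ _))
      _ ≤ ∑ _j, max r 0 ^ (2 * k + 1) := sum_le_sum_of_subset_of_nonneg (erase_subset _ _)
          fun _ _ _ => pow_nonneg (le_max_right _ _) _
      _ = _ := by simp
  rw [hodd.neg_pow]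
  linarith [h _ hodd, add_sum_erase univ (fun j => e j ^ (2 * k + 1)) (mem_univ i)]

lemma abs_le_iSup_abs_of_sum_even_pow_le (h : ∀ k, ∑ j, e j ^ (2 * k) ≤ ∑ j, f j ^ (2 * k))
    (i : ι) : |e i| ≤ ⨆ j, |f j| := by
  refine le_of_frequently_pow_le_mul_pow (c := Fintype.card ι)
    (Real.iSup_nonneg fun j => abs_nonneg _) (frequently_atTop.2 fun k => ⟨2 * k, by omega, ?_⟩)
  have heven : Even (2 * k) := even_two_mul k
  calc |e i| ^ (2 * k) = e i ^ (2 * k) := heven.pow_abs _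
    _ ≤ ∑ j, e j ^ (2 * k) := single_le_sum (fun j _ => heven.pow_nonneg _) (mem_univ i)
    _ ≤ ∑ j, f j ^ (2 * k) := h k
    _ ≤ ∑ _j : ι, (⨆ j, |f j|) ^ (2 * k) := sum_le_sum fun j _ => by
      rw [← heven.pow_abs]
      exact pow_le_pow_left₀ (abs_nonneg _)
        (le_ciSup (f := fun j => |f j|) (Set.finite_range _).bddAbove j) _
    _ = Fintype.card ι * (⨆ j, |f j|) ^ (2 * k) := by simp

lemma le_iSup_of_sum_pow_le (heven : ∀ k, ∑ j, e j ^ (2 * k) ≤ ∑ j, f j ^ (2 * k))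
    (hodd : ∀ k, Odd k → 0 ≤ ∑ j, f j ^ k) (i : ι) : e i ≤ ⨆ j, f j := by
  have : Nonempty ι := ⟨i⟩
  calc e i ≤ |e i| := le_abs_self _
    _ ≤ ⨆ j, |f j| := abs_le_iSup_abs_of_sum_even_pow_le heven i
    _ ≤ ⨆ j, f j := ciSup_le fun j => abs_le'.2
      ⟨le_ciSup (Set.finite_range f).bddAbove j, neg_le_iSup_of_sum_odd_pow_nonneg hodd j⟩

end PowerSums

lemma spectrum.mem_algebraMap_sub_iff {R A : Type*} [CommRing R] [Ring A] [Algebra R A]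
    {a : A} {r x : R} : x ∈ spectrum R (algebraMap R A r - a) ↔ r - x ∈ spectrum R a := by
  rw [← spectrum.singleton_sub_eq, Set.singleton_sub]
  exact ⟨fun ⟨y, hy, hyx⟩ => hyx ▸ by rwa [sub_sub_cancel], fun h => ⟨_, h, sub_sub_cancel r x⟩⟩

namespace Matrix

section Entrywise

variable {l m n α : Type*} [Fintype m] [Semiring α] [PartialOrder α] [IsOrderedRing α]

lemma mul_apply_nonneg_s8 {A : Matrix l m α} {B : Matrix m n α} (hA : ∀ i j, 0 ≤ A i j)
    (hB : ∀ i j, 0 ≤ B i j) (i : l) (j : n) : 0 ≤ (A * B) i j :=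
  sum_nonneg fun k _ => mul_nonneg (hA i k) (hB k j)

lemma mul_apply_le_mul_apply {A A' : Matrix l m α} {B B' : Matrix m n α}
    (hA : ∀ i j, 0 ≤ A i j) (hAA' : ∀ i j, A i j ≤ A' i j)
    (hB : ∀ i j, 0 ≤ B i j) (hBB' : ∀ i j, B i j ≤ B' i j) (i : l) (j : n) :
    (A * B) i j ≤ (A' * B') i j :=
  sum_le_sum fun k _ => mul_le_mul (hAA' i k) (hBB' k j) (hB k j) ((hA i k).trans (hAA' i k))

lemma pow_apply_le_pow_apply [DecidableEq m] {A B : Matrix m m α} (hA : ∀ i j, 0 ≤ A i j)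
    (hAB : ∀ i j, A i j ≤ B i j) (k : ℕ) (i j : m) : (A ^ k) i j ≤ (B ^ k) i j := by
  induction k generalizing i j with
  | zero => rfl
  | succ k ih =>
    rw [pow_succ, pow_succ]
    exact mul_apply_le_mul_apply (pow_apply_nonneg hA k) ih hA hAB i j

end Entrywise

variable {ι : Type*} [Fintype ι] [DecidableEq ι]

lemma IsHermitian.trace_pow {S : Matrix ι ι ℝ} (hS : S.IsHermitian) (k : ℕ) :
    (S ^ k).trace = ∑ i, hS.eigenvalues i ^ k := by
  conv_lhs => rw [hS.spectral_theorem]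
  rw [← map_pow, Unitary.conjStarAlgAut_apply, trace_mul_cycle, Unitary.coe_star_mul_self, one_mul,
    diagonal_pow, trace_diagonal]
  simp

def IsSymmetrizable (M : Matrix ι ι ℝ) : Prop :=
  ∃ V : (Matrix ι ι ℝ)ˣ, ((↑V⁻¹ : Matrix ι ι ℝ) * M * (V : Matrix ι ι ℝ)).IsHermitian

namespace IsSymmetrizable

variable {M M₁ M₂ : Matrix ι ι ℝ}

lemma exists_eigenvalues (hM : M.IsSymmetrizable) :
    ∃ e : ι → ℝ, spectrum ℝ M = Set.range e ∧ ∀ k : ℕ, (M ^ k).trace = ∑ i, e i ^ k := by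
  obtain ⟨V, hV⟩ := hM
  refine ⟨hV.eigenvalues, ?_, fun k => ?_⟩
  · rw [← hV.spectrum_real_eq_range_eigenvalues, spectrum.units_conjugate']
  · rw [← hV.trace_pow, Units.conj_pow', trace_units_conj']

lemma spectrum_finite (hM : M.IsSymmetrizable) : (spectrum ℝ M).Finite := by
  obtain ⟨e, he, -⟩ := hM.exists_eigenvalues
  exact he ▸ Set.finite_range e

lemma spectrum_nonempty [Nonempty ι] (hM : M.IsSymmetrizable) : (spectrum ℝ M).Nonempty := by
  obtain ⟨e, he, -⟩ := hM.exists_eigenvalues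
  exact he ▸ Set.range_nonempty e

lemma neg_le_sSup_spectrum (hM : M.IsSymmetrizable) (hM₀ : ∀ i j, 0 ≤ M i j) {x : ℝ}
    (hx : x ∈ spectrum ℝ M) : -x ≤ sSup (spectrum ℝ M) := by
  obtain ⟨e, he, htr⟩ := hM.exists_eigenvalues
  rw [he] at hx ⊢
  obtain ⟨i, rfl⟩ := hx
  refine neg_le_iSup_of_sum_odd_pow_nonneg (fun k _ => ?_) i
  exact htr k ▸ sum_nonneg fun j _ => pow_apply_nonneg hM₀ k j j

lemma le_sSup_spectrum_of_le (h₁ : M₁.IsSymmetrizable) (h₂ : M₂.IsSymmetrizable)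
    (hM₁ : ∀ i j, 0 ≤ M₁ i j) (hle : ∀ i j, M₁ i j ≤ M₂ i j) {x : ℝ}
    (hx : x ∈ spectrum ℝ M₁) : x ≤ sSup (spectrum ℝ M₂) := by
  obtain ⟨e, he, htr₁⟩ := h₁.exists_eigenvalues
  obtain ⟨f, hf, htr₂⟩ := h₂.exists_eigenvalues
  have hM₂ : ∀ i j, 0 ≤ M₂ i j := fun i j => (hM₁ i j).trans (hle i j)
  rw [he] at hx
  obtain ⟨i, rfl⟩ := hx
  rw [hf]
  refine le_iSup_of_sum_pow_le (fun k => ?_) (fun k _ => ?_) i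
  · rw [← htr₁, ← htr₂]
    exact sum_le_sum fun j _ => pow_apply_le_pow_apply hM₁ hle _ j j
  · exact htr₂ k ▸ sum_nonneg fun j _ => pow_apply_nonneg hM₂ k j j

end IsSymmetrizable

open scoped MatrixOrder in
lemma PosDef.exists_units_conj_inv_mul {B : Matrix ι ι ℝ} (hB : B.PosDef) :
    ∃ V : (Matrix ι ι ℝ)ˣ, ∀ A,
      (↑V⁻¹ : Matrix ι ι ℝ) * (B⁻¹ * A) * (V : Matrix ι ι ℝ) = (V : Matrix ι ι ℝ)ᴴ * A * V := by
  obtain ⟨R, rfl, hR⟩ : ∃ R : Matrix ι ι ℝ, R * R = B ∧ R.IsHermitian :=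
    ⟨CFC.sqrt B, CFC.sqrt_mul_sqrt_self B hB.posSemidef.nonneg,
      (CFC.sqrt_nonneg B).posSemidef.isHermitian⟩
  have hRu : IsUnit R := isUnit_of_mul_isUnit_left hB.isUnit
  have hRd : IsUnit R.det := (isUnit_iff_isUnit_det R).1 hRu
  refine ⟨(isUnit_nonsing_inv_iff.2 hRu).unit, fun A => ?_⟩
  rw [coe_units_inv, IsUnit.unit_spec, nonsing_inv_nonsing_inv _ hRd, conjTranspose_nonsing_inv,
    hR.eq, mul_inv_rev]
  simp only [Matrix.mul_assoc, mul_nonsing_inv_cancel_left _ _ hRd]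

variable {A B : Matrix ι ι ℝ}

lemma isSymmetrizable_inv_mul (hB : B.PosDef) (hA : A.IsHermitian) :
    (B⁻¹ * A).IsSymmetrizable := by
  obtain ⟨V, hV⟩ := hB.exists_units_conj_inv_mul
  exact ⟨V, hV A ▸ isHermitian_conjTranspose_mul_mul _ hA⟩

lemma pos_of_mem_spectrum_inv_mul (hB : B.PosDef) (hA : A.PosDef) {x : ℝ}
    (hx : x ∈ spectrum ℝ (B⁻¹ * A)) : 0 < x := by
  obtain ⟨V, hV⟩ := hB.exists_units_conj_inv_mul
  have hPD : ((V : Matrix ι ι ℝ)ᴴ * A * V).PosDef :=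
    hA.conjTranspose_mul_mul_same (mulVec_injective_iff_isUnit.2 (Units.isUnit _))
  rw [← spectrum.units_conjugate' (u := V), hV, hPD.isHermitian.spectrum_real_eq_range_eigenvalues]
    at hx
  obtain ⟨i, rfl⟩ := hx
  exact hPD.eigenvalues_pos i

lemma mem_spectrum_map_ofReal_iff (A : Matrix ι ι ℝ) (x : ℝ) :
    (x : ℂ) ∈ spectrum ℂ (A.map (Complex.ofReal ·)) ↔ x ∈ spectrum ℝ A := by
  rw [spectrum.mem_iff, spectrum.mem_iff, not_iff_not]
  have hmap : algebraMap ℂ (Matrix ι ι ℂ) x - A.map (Complex.ofReal ·)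
      = (algebraMap ℝ (Matrix ι ι ℝ) x - A).map Complex.ofRealHom := by
    ext i j
    simp [algebraMap_matrix_apply, apply_ite]
  rw [hmap, isUnit_iff_isUnit_det, isUnit_iff_isUnit_det, ← RingHom.mapMatrix_apply,
    ← RingHom.map_det, isUnit_iff_ne_zero, isUnit_iff_ne_zero]
  simp

lemma inv_mem_spectrum_inv_mul {A B : Matrix ι ι ℝ} (hA : IsUnit A) (hB : IsUnit B) {x : ℝ}
    (hx : x ∈ spectrum ℝ (A⁻¹ * B)) (hx₀ : x ≠ 0) : x⁻¹ ∈ spectrum ℝ (B⁻¹ * A) := by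
  have h := (spectrum.inv_mem_iff (r := Units.mk0 x hx₀) (a := hA.unit⁻¹ * hB.unit)).1
    (by simpa [coe_units_inv] using hx)
  simpa [coe_units_inv, mul_inv_rev] using h

variable {H B B₁ B₂ : Matrix ι ι ℝ}

lemma sInf_spectrum_inv_mul_mem [Nonempty ι] (hB : B.PosDef) (hH : H.IsHermitian) :
    sInf (spectrum ℝ (B⁻¹ * H)) ∈ spectrum ℝ (B⁻¹ * H) :=
  let hS := isSymmetrizable_inv_mul hB hH
  hS.spectrum_nonempty.csInf_mem hS.spectrum_finite

lemma sInf_spectrum_inv_mul_pos [Nonempty ι] (hB : B.PosDef) (hH : H.PosDef) :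
    0 < sInf (spectrum ℝ (B⁻¹ * H)) :=
  pos_of_mem_spectrum_inv_mul hB hH (sInf_spectrum_inv_mul_mem hB hH.isHermitian)

lemma sSup_spectrum_inv_mul_le_two (hB : B.PosDef) (hH : H.PosDef)
    (hBinv : ∀ i j, 0 ≤ B⁻¹ i j) (hC : ∀ i j, 0 ≤ (B - H) i j) :
    sSup (spectrum ℝ (B⁻¹ * H)) ≤ 2 := by
  -- `σ(B⁻¹H) = 1 - σ(M)` is positive, so `σ(M) < 1`, and Perron–Frobenius keeps `σ(M) ≥ -1`.
  have hMH : B⁻¹ * H = algebraMap ℝ _ 1 - B⁻¹ * (B - H) := by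
    rw [map_one, Matrix.mul_sub, nonsing_inv_mul _ ((isUnit_iff_isUnit_det B).1 hB.isUnit)]
    abel
  set M := B⁻¹ * (B - H)
  have hM : M.IsSymmetrizable := isSymmetrizable_inv_mul hB (hB.isHermitian.sub hH.isHermitian)
  have hM₁ : sSup (spectrum ℝ M) ≤ 1 := by
    refine Real.sSup_le (fun y hy => ?_) zero_le_one
    have hy' : 1 - (1 - y) ∈ spectrum ℝ M := by rwa [sub_sub_cancel]
    linarith [pos_of_mem_spectrum_inv_mul hB hH (hMH ▸ spectrum.mem_algebraMap_sub_iff.2 hy')]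
  refine Real.sSup_le (fun x hx => ?_) zero_le_two
  rw [hMH, spectrum.mem_algebraMap_sub_iff] at hx
  linarith [hM.neg_le_sSup_spectrum (mul_apply_nonneg_s8 hBinv hC) hx]

lemma sInf_spectrum_inv_mul_le_of_le [Nonempty ι] (hH : H.PosDef) (hB₁ : B₁.PosDef)
    (hB₂ : B₂.PosDef) (hHinv : ∀ i j, 0 ≤ H⁻¹ i j) (hC₁ : ∀ i j, 0 ≤ (B₁ - H) i j)
    (hle : ∀ i j, (B₁ - H) i j ≤ (B₂ - H) i j) :
    sInf (spectrum ℝ (B₂⁻¹ * H)) ≤ sInf (spectrum ℝ (B₁⁻¹ * H)) := by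
  -- `λ ↦ λ⁻¹ - 1` maps `σ(B⁻¹H)` onto `σ(H⁻¹(B - H))` reversing the order, so `λ_min(B⁻¹H)`
  -- is governed by `λ_max(H⁻¹(B - H))`, which is monotone in `B - H`.
  have hshift : ∀ B : Matrix ι ι ℝ, H⁻¹ * B = algebraMap ℝ _ 1 + H⁻¹ * (B - H) := fun B => by
    rw [map_one, Matrix.mul_sub, nonsing_inv_mul _ ((isUnit_iff_isUnit_det H).1 hH.isUnit)]
    abel
  set b₁ := sInf (spectrum ℝ (B₁⁻¹ * H))
  have hb₁ : b₁ ∈ spectrum ℝ (B₁⁻¹ * H) := sInf_spectrum_inv_mul_mem hB₁ hH.isHermitian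
  have hb₁pos : 0 < b₁ := sInf_spectrum_inv_mul_pos hB₁ hH
  have hM₁ : b₁⁻¹ - 1 ∈ spectrum ℝ (H⁻¹ * (B₁ - H)) := by
    rw [← spectrum.add_mem_add_iff (s := (1 : ℝ)), sub_add_cancel, ← hshift]
    exact inv_mem_spectrum_inv_mul hB₁.isUnit hH.isUnit hb₁ hb₁pos.ne'
  have hS₂ := isSymmetrizable_inv_mul hH (hB₂.isHermitian.sub hH.isHermitian)
  set m₂ := sSup (spectrum ℝ (H⁻¹ * (B₂ - H)))
  have hm₂ : 1 + m₂ ∈ spectrum ℝ (H⁻¹ * B₂) := by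
    rw [hshift, add_comm (1 : ℝ)]
    exact spectrum.add_mem_add_iff.2 (hS₂.spectrum_nonempty.csSup_mem hS₂.spectrum_finite)
  have hS₁ := isSymmetrizable_inv_mul hH (hB₁.isHermitian.sub hH.isHermitian)
  have hb₁m₂ : b₁⁻¹ ≤ 1 + m₂ := by
    linarith [hS₁.le_sSup_spectrum_of_le hS₂ (mul_apply_nonneg_s8 hHinv hC₁)
      (mul_apply_le_mul_apply hHinv (fun _ _ => le_rfl) hC₁ hle) hM₁]
  calc sInf (spectrum ℝ (B₂⁻¹ * H)) ≤ (1 + m₂)⁻¹ :=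
        csInf_le (isSymmetrizable_inv_mul hB₂ hH.isHermitian).spectrum_finite.bddBelow
          (inv_mem_spectrum_inv_mul hH.isUnit hB₂.isUnit hm₂
            ((inv_pos.2 hb₁pos).trans_le hb₁m₂).ne')
    _ ≤ b₁ := inv_le_of_inv_le₀ hb₁pos hb₁m₂

end Matrix

lemma maxEig_eq_sSup {n : ℕ} (A : Matrix (Fin n) (Fin n) ℝ) :
    maxEig A = sSup (spectrum ℝ A) := by
  simp only [maxEig, Matrix.mem_spectrum_map_ofReal_iff, Set.ofPred_mem_eq]

lemma minEig_eq_sInf {n : ℕ} (A : Matrix (Fin n) (Fin n) ℝ) :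
    minEig A = sInf (spectrum ℝ A) := by
  simp only [minEig, Matrix.mem_spectrum_map_ofReal_iff, Set.ofPred_mem_eq]

theorem stmt_8_general {n : ℕ} (hn : 1 ≤ n)
    (H B₁ B₂ : Matrix (Fin n) (Fin n) ℝ)
    (hHpd : H.PosDef) (hB1pd : B₁.PosDef) (hB2pd : B₂.PosDef)
    (h1 : IsRegularSplitting H B₁ (B₁ - H))
    (hHinv : ∀ i j, 0 ≤ H⁻¹ i j)
    (hC1nonneg : ∀ i j, 0 ≤ (B₁ - H) i j)
    (hle : ∀ i j, (B₁ - H) i j ≤ (B₂ - H) i j)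
    (hmax2 : 1 ≤ maxEig (B₂⁻¹ * H)) :
    maxEig (B₁⁻¹ * H) / minEig (B₁⁻¹ * H) ≤
      2 * (maxEig (B₂⁻¹ * H) / minEig (B₂⁻¹ * H)) := by
  have : Nonempty (Fin n) := ⟨⟨0, hn⟩⟩
  simp only [maxEig_eq_sSup, minEig_eq_sInf] at hmax2 ⊢
  have ha₁ := sSup_spectrum_inv_mul_le_two hB1pd hHpd h1.2.2.1 hC1nonneg
  have hb := sInf_spectrum_inv_mul_le_of_le hHpd hB1pd hB2pd hHinv hC1nonneg hle
  have hb₂ := sInf_spectrum_inv_mul_pos hB2pd hHpd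
  calc sSup (spectrum ℝ (B₁⁻¹ * H)) / sInf (spectrum ℝ (B₁⁻¹ * H))
      ≤ 2 / sInf (spectrum ℝ (B₁⁻¹ * H)) := div_le_div_of_nonneg_right ha₁ (hb₂.le.trans hb)
    _ ≤ 2 / sInf (spectrum ℝ (B₂⁻¹ * H)) := div_le_div_of_nonneg_left zero_le_two hb₂ hb
    _ ≤ 2 * (sSup (spectrum ℝ (B₂⁻¹ * H)) / sInf (spectrum ℝ (B₂⁻¹ * H))) := by
      rw [← mul_div_assoc]
      exact div_le_div_of_nonneg_right (by linarith) hb₂.le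

/-- Let `H, B₁, B₂` be symmetric positive-definite with
`(B₁, B₁ - H)` and `(B₂, B₂ - H)` regular splittings of `H`, `H⁻¹ ≥ 0` entrywise,
`0 ≤ B₁ - H ≤ B₂ - H` entrywise, and the largest eigenvalue of `B₂⁻¹H` at least `1`.
Then `λ_max(B₁⁻¹H)/λ_min(B₁⁻¹H) ≤ 2 λ_max(B₂⁻¹H)/λ_min(B₂⁻¹H)`. -/
theorem stmt_8 {n : ℕ} (hn : 1 ≤ n)
    (H B₁ B₂ : Matrix (Fin n) (Fin n) ℝ)
    (hHpd : H.PosDef) (hB1pd : B₁.PosDef) (hB2pd : B₂.PosDef)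
    (h1 : IsRegularSplitting H B₁ (B₁ - H)) (h2 : IsRegularSplitting H B₂ (B₂ - H))
    (hHinv : ∀ i j, 0 ≤ H⁻¹ i j)
    (hC1nonneg : ∀ i j, 0 ≤ (B₁ - H) i j)
    (hle : ∀ i j, (B₁ - H) i j ≤ (B₂ - H) i j)
    (hmax2 : 1 ≤ maxEig (B₂⁻¹ * H)) :
    maxEig (B₁⁻¹ * H) / minEig (B₁⁻¹ * H) ≤
      2 * (maxEig (B₂⁻¹ * H) / minEig (B₂⁻¹ * H)) :=
  stmt_8_general hn H B₁ B₂ hHpd hB1pd hB2pd h1 hHinv hC1nonneg hle hmax2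
end

section
/- Let P be an n×n row-stochastic real matrix (with n ≥ 1), let γ ∈ [0,1), let m ≥ 1 be a natural number, and set H_m = I - γ^m P^m and H̄_m = diag(H_m). If H_m is symmetric, then κ(H̄_m⁻¹ H_m) ≤ 2 κ(H_m), where κ denotes the ratio of the largest to the smallest eigenvalue. -/
/-!
Write `H = 1 - K` with `K = γ^m P^m`: it is symmetric and nonnegative with constant row sums
`c = γ^m < 1`. Expanding `∑ᵢⱼ Kᵢⱼ (vᵢ ± vⱼ)² ≥ 0` gives `vᵀKv ≤ c‖v‖²`, so the spectrum of `H`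
lies in some `[a, b]` with `a ≥ 1 - c > 0`, and, keeping only the diagonal terms of the `+` sum,
`vᵀHv ≤ 2 vᵀDv` for `D = diag H`. The entries of `D` are Rayleigh quotients of `H`, hence in
`[a, b]`. For a generalized eigenpair `Hv = xDv` this gives `a‖v‖² ≤ x vᵀDv ≤ x b‖v‖²` and
`x ≤ 2`, so the spectrum of `D⁻¹H` lies in `[a/b, 2]` and `κ(D⁻¹H) ≤ 2b/a = 2κ(H)`.
-/

open Matrix

section Spectrum

variable {ι : Type*} [Fintype ι] [DecidableEq ι]

theorem exists_mulVec_eq_smul_of_mem_spectrum {K : Type*} [Field K] {A : Matrix ι ι K} {x : K}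
    (hx : x ∈ spectrum K A) : ∃ v, v ≠ 0 ∧ A *ᵥ v = x • v := by
  rw [spectrum.mem_iff, isUnit_iff_isUnit_det, isUnit_iff_ne_zero, not_not,
    ← exists_mulVec_eq_zero_iff] at hx
  obtain ⟨v, hv, hAv⟩ := hx
  refine ⟨v, hv, ?_⟩
  rw [sub_mulVec, Algebra.algebraMap_eq_smul_one, smul_mulVec, one_mulVec, sub_eq_zero] at hAv
  exact hAv.symm

theorem ofReal_mem_spectrum_map_iff (A : Matrix ι ι ℝ) (x : ℝ) :
    (x : ℂ) ∈ spectrum ℂ (A.map (Complex.ofReal ·)) ↔ x ∈ spectrum ℝ A := by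
  rw [mem_spectrum_iff_isRoot_charpoly, mem_spectrum_iff_isRoot_charpoly]
  exact charpoly_map A Complex.ofRealHom ▸ Polynomial.isRoot_map_iff Complex.ofReal_injective

theorem le_of_mem_spectrum_of_forall_mul_dotProduct_self_le {A : Matrix ι ι ℝ} {α x : ℝ}
    (hA : ∀ v, α * (v ⬝ᵥ v) ≤ v ⬝ᵥ (A *ᵥ v)) (hx : x ∈ spectrum ℝ A) : α ≤ x := by
  obtain ⟨v, hv, hAv⟩ := exists_mulVec_eq_smul_of_mem_spectrum hx
  have hpos : 0 < v ⬝ᵥ v := by simpa using dotProduct_star_self_pos_iff.mpr hv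
  have hquad := hA v
  rw [hAv, dotProduct_smul, smul_eq_mul] at hquad
  exact le_of_mul_le_mul_right hquad hpos

namespace Matrix.IsHermitian

variable {H : Matrix ι ι ℝ}

theorem mul_dotProduct_self_le (hH : H.IsHermitian) {α : ℝ} (h : ∀ x ∈ spectrum ℝ H, α ≤ x)
    (v : ι → ℝ) : α * (v ⬝ᵥ v) ≤ v ⬝ᵥ (H *ᵥ v) := by
  have hpsd : (H - algebraMap ℝ _ α).PosSemidef := by
    refine posSemidef_iff_isHermitian_and_spectrum_nonneg.mpr ⟨?_, ?_⟩
    · rw [algebraMap_eq_diagonal]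
      exact hH.sub (isHermitian_diagonal _)
    · rw [← spectrum.sub_singleton_eq]
      rintro _ ⟨x, hx, _, rfl, rfl⟩
      exact sub_nonneg.mpr (h x hx)
  have hquad := hpsd.dotProduct_mulVec_nonneg v
  rwa [Algebra.algebraMap_eq_smul_one, sub_mulVec, smul_mulVec, one_mulVec, dotProduct_sub,
    dotProduct_smul, star_trivial, sub_nonneg, smul_eq_mul] at hquad

theorem dotProduct_mulVec_le (hH : H.IsHermitian) {β : ℝ} (h : ∀ x ∈ spectrum ℝ H, x ≤ β)
    (v : ι → ℝ) : v ⬝ᵥ (H *ᵥ v) ≤ β * (v ⬝ᵥ v) := by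
  have hneg := hH.neg.mul_dotProduct_self_le (α := -β) (fun x hx => by
    rw [← spectrum.neg_eq] at hx
    simpa using neg_le_neg (h (-x) hx)) v
  rwa [neg_mulVec, dotProduct_neg, neg_mul, neg_le_neg_iff] at hneg

end Matrix.IsHermitian

end Spectrum

section SymmetricNonnegConstantRowSum

variable {ι : Type*} [Fintype ι] {K : Matrix ι ι ℝ} {c : ℝ}

theorem sum_sum_mul_add_smul_sq (hK : K.IsSymm) (hrow : ∀ i, ∑ j, K i j = c) (s : ℝ)
    (v : ι → ℝ) :
    ∑ i, ∑ j, K i j * (v i + s * v j) ^ 2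
      = (1 + s ^ 2) * c * (v ⬝ᵥ v) + 2 * s * (v ⬝ᵥ (K *ᵥ v)) := by
  have hcol : ∀ j, ∑ i, K i j = c := fun j => by simpa only [hK.apply] using hrow j
  have hrows : ∑ i, ∑ j, K i j * v i ^ 2 = c * (v ⬝ᵥ v) := by
    simp only [← Finset.sum_mul, hrow, dotProduct, Finset.mul_sum, sq]
  have hcols : ∑ i, ∑ j, K i j * v j ^ 2 = c * (v ⬝ᵥ v) := by
    rw [Finset.sum_comm]
    simp only [← Finset.sum_mul, hcol, dotProduct, Finset.mul_sum, sq]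
  have hcross : ∑ i, ∑ j, K i j * (v i * v j) = v ⬝ᵥ (K *ᵥ v) := by
    simp only [dotProduct, mulVec, Finset.mul_sum]
    exact Finset.sum_congr rfl fun i _ => Finset.sum_congr rfl fun j _ => by ring
  calc ∑ i, ∑ j, K i j * (v i + s * v j) ^ 2
      = ∑ i, ∑ j, (K i j * v i ^ 2 + s ^ 2 * (K i j * v j ^ 2) + 2 * s * (K i j * (v i * v j))) :=
        Finset.sum_congr rfl fun i _ => Finset.sum_congr rfl fun j _ => by ring
    _ = (1 + s ^ 2) * c * (v ⬝ᵥ v) + 2 * s * (v ⬝ᵥ (K *ᵥ v)) := by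
        simp only [Finset.sum_add_distrib, ← Finset.mul_sum, hrows, hcols, hcross]
        ring

theorem dotProduct_mulVec_le_of_isSymm (hK : K.IsSymm) (hK0 : ∀ i j, 0 ≤ K i j)
    (hrow : ∀ i, ∑ j, K i j = c) (v : ι → ℝ) : v ⬝ᵥ (K *ᵥ v) ≤ c * (v ⬝ᵥ v) := by
  have hexpand := sum_sum_mul_add_smul_sq hK hrow (-1) v
  have hnonneg : 0 ≤ ∑ i, ∑ j, K i j * (v i + -1 * v j) ^ 2 :=
    Finset.sum_nonneg fun i _ => Finset.sum_nonneg fun j _ => mul_nonneg (hK0 i j) (sq_nonneg _)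
  linarith

theorem two_mul_sum_diag_le_of_isSymm (hK : K.IsSymm) (hK0 : ∀ i j, 0 ≤ K i j)
    (hrow : ∀ i, ∑ j, K i j = c) (v : ι → ℝ) :
    2 * ∑ i, K i i * v i ^ 2 ≤ c * (v ⬝ᵥ v) + v ⬝ᵥ (K *ᵥ v) := by
  have hexpand := sum_sum_mul_add_smul_sq hK hrow 1 v
  have hdiag : ∑ i, K i i * (v i + 1 * v i) ^ 2 ≤ ∑ i, ∑ j, K i j * (v i + 1 * v j) ^ 2 :=
    Finset.sum_le_sum fun i _ => Finset.single_le_sum (f := fun j => K i j * (v i + 1 * v j) ^ 2)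
      (fun j _ => mul_nonneg (hK0 i j) (sq_nonneg _)) (Finset.mem_univ i)
  have h4 : ∑ i, K i i * (v i + 1 * v i) ^ 2 = 4 * ∑ i, K i i * v i ^ 2 := by
    rw [Finset.mul_sum]
    exact Finset.sum_congr rfl fun i _ => by ring
  linarith

theorem one_sub_mul_dotProduct_self_le [DecidableEq ι] (hK : K.IsSymm)
    (hK0 : ∀ i j, 0 ≤ K i j) (hrow : ∀ i, ∑ j, K i j = c) (v : ι → ℝ) :
    (1 - c) * (v ⬝ᵥ v) ≤ v ⬝ᵥ ((1 - K) *ᵥ v) := by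
  rw [sub_mulVec, one_mulVec, dotProduct_sub, sub_mul, one_mul]
  linarith [dotProduct_mulVec_le_of_isSymm hK hK0 hrow v]

theorem posSemidef_two_smul_diagonal_diag_one_sub [DecidableEq ι] (hK : K.IsSymm)
    (hK0 : ∀ i j, 0 ≤ K i j) (hrow : ∀ i, ∑ j, K i j = c) (hc : c ≤ 1) :
    (2 • diagonal (1 - K).diag - (1 - K)).PosSemidef := by
  refine PosSemidef.of_dotProduct_mulVec_nonneg ?_ fun v => ?_
  · rw [isHermitian_iff_isSymm]
    exact ((isSymm_diagonal _).smul 2).sub (isSymm_one.sub hK)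
  · have hD : v ⬝ᵥ (diagonal (1 - K).diag *ᵥ v) = v ⬝ᵥ v - ∑ i, K i i * v i ^ 2 := by
      simp only [dotProduct, mulVec_diagonal, diag_apply, Matrix.sub_apply, one_apply_eq,
        ← Finset.sum_sub_distrib]
      exact Finset.sum_congr rfl fun i _ => by ring
    have hvv : 0 ≤ v ⬝ᵥ v := by simpa using dotProduct_star_self_nonneg v
    rw [star_trivial, sub_mulVec, smul_mulVec, dotProduct_sub, dotProduct_smul, hD,
      sub_mulVec, one_mulVec, dotProduct_sub, two_smul]
    nlinarith [two_mul_sum_diag_le_of_isSymm hK hK0 hrow v]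

end SymmetricNonnegConstantRowSum

theorem Matrix.IsHermitian.spectrum_diagonal_inv_mul_subset {ι : Type*} [Fintype ι]
    [DecidableEq ι] {H : Matrix ι ι ℝ} (hH : H.IsHermitian) {α β : ℝ} (hα : 0 < α)
    (hspec : spectrum ℝ H ⊆ Set.Icc α β) (h2D : (2 • diagonal H.diag - H).PosSemidef) :
    spectrum ℝ ((diagonal H.diag)⁻¹ * H) ⊆ Set.Icc (α / β) 2 := by
  have hlow := hH.mul_dotProduct_self_le fun x hx => (hspec hx).1
  have hup := hH.dotProduct_mulVec_le fun x hx => (hspec hx).2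
  have hdiag : ∀ i, α ≤ H i i ∧ H i i ≤ β := fun i => by
    simpa [mulVec_single] using And.intro (hlow (Pi.single i 1)) (hup (Pi.single i 1))
  set D := diagonal H.diag
  have hD : D.PosDef := posDef_diagonal_iff.mpr fun i => hα.trans_le (hdiag i).1
  intro x hx
  obtain ⟨v, hv, hMv⟩ := exists_mulVec_eq_smul_of_mem_spectrum hx
  have hHv : H *ᵥ v = x • (D *ᵥ v) := by
    rw [← mulVec_smul, ← hMv, mulVec_mulVec, ← Matrix.mul_assoc,
      mul_nonsing_inv _ (isUnit_iff_isUnit_det _ |>.mp hD.isUnit), Matrix.one_mul]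
  have hvv : 0 < v ⬝ᵥ v := by simpa using dotProduct_star_self_pos_iff.mpr hv
  have hqD : 0 < v ⬝ᵥ (D *ᵥ v) := by simpa using hD.dotProduct_mulVec_pos hv
  have hqDle : v ⬝ᵥ (D *ᵥ v) ≤ β * (v ⬝ᵥ v) := by
    simp only [D, dotProduct, mulVec_diagonal, diag_apply, Finset.mul_sum]
    exact Finset.sum_le_sum fun i _ => by nlinarith [(hdiag i).2, mul_self_nonneg (v i)]
  have hqH : v ⬝ᵥ (H *ᵥ v) = x * (v ⬝ᵥ (D *ᵥ v)) := by
    rw [hHv, dotProduct_smul, smul_eq_mul]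
  have hβ : 0 < β := by nlinarith [hlow v, hup v]
  have h2 := h2D.dotProduct_mulVec_nonneg v
  rw [star_trivial, sub_mulVec, smul_mulVec, dotProduct_sub, dotProduct_smul, two_smul,
    hqH] at h2
  refine ⟨(div_le_iff₀ hβ).mpr ?_, ?_⟩
  · nlinarith [hlow v]
  · nlinarith

section ConditionNumber

variable {n : ℕ}

theorem maxEig_eq_sSup_spectrum (A : Matrix (Fin n) (Fin n) ℝ) :
    maxEig A = sSup (spectrum ℝ A) := by
  simp only [maxEig, ofReal_mem_spectrum_map_iff, Set.ofPred_mem_eq]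

theorem minEig_eq_sInf_spectrum (A : Matrix (Fin n) (Fin n) ℝ) :
    minEig A = sInf (spectrum ℝ A) := by
  simp only [minEig, ofReal_mem_spectrum_map_iff, Set.ofPred_mem_eq]

theorem maxEig_div_minEig_le {A : Matrix (Fin n) (Fin n) ℝ} {α β : ℝ} (hα : 0 < α) (hβ : 0 ≤ β)
    (hspec : spectrum ℝ A ⊆ Set.Icc α β) : maxEig A / minEig A ≤ β / α := by
  rw [maxEig_eq_sSup_spectrum, minEig_eq_sInf_spectrum]
  rcases (spectrum ℝ A).eq_empty_or_nonempty with hempty | hne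
  · rw [hempty, Real.sSup_empty, zero_div]
    positivity
  · exact div_le_div₀ hβ (csSup_le hne fun x hx => (hspec hx).2) hα
      (le_csInf hne fun x hx => (hspec hx).1)

theorem maxEig_div_minEig_diagonal_inv_mul_le [NeZero n] {H : Matrix (Fin n) (Fin n) ℝ}
    (hH : H.IsHermitian) (hpos : ∀ x ∈ spectrum ℝ H, 0 < x)
    (h2D : (2 • diagonal H.diag - H).PosSemidef) :
    maxEig ((diagonal H.diag)⁻¹ * H) / minEig ((diagonal H.diag)⁻¹ * H)
      ≤ 2 * (maxEig H / minEig H) := by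
  have hne : (spectrum ℝ H).Nonempty :=
    hH.spectrum_real_eq_range_eigenvalues ▸ Set.range_nonempty _
  have hfin := H.finite_real_spectrum
  rw [maxEig_eq_sSup_spectrum H, minEig_eq_sInf_spectrum H]
  set a := sInf (spectrum ℝ H)
  set b := sSup (spectrum ℝ H)
  have ha : 0 < a := hpos a (hne.csInf_mem hfin)
  have hb : 0 < b := hpos b (hne.csSup_mem hfin)
  have hspec : spectrum ℝ H ⊆ Set.Icc a b := fun x hx =>
    ⟨csInf_le hfin.bddBelow hx, le_csSup hfin.bddAbove hx⟩
  calc _ ≤ 2 / (a / b) := maxEig_div_minEig_le (div_pos ha hb) zero_le_two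
          (hH.spectrum_diagonal_inv_mul_subset ha hspec h2D)
    _ = 2 * (b / a) := by rw [div_div_eq_mul_div, mul_div_assoc]

end ConditionNumber

/-- For a row-stochastic `P`, `γ ∈ [0,1)`, `m ≥ 1`,
`H_m = I - γ^m P^m`, `H̄_m = diag(H_m)`: if `H_m` is symmetric, then
`κ(H̄_m⁻¹H_m) ≤ 2 κ(H_m)`. -/
theorem stmt_13 {n : ℕ} (hn : 1 ≤ n) (P : Matrix (Fin n) (Fin n) ℝ)
    (hP0 : ∀ i j, 0 ≤ P i j) (hP1 : ∀ i, ∑ j, P i j = 1)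
    (γ : ℝ) (hγ0 : 0 ≤ γ) (hγ1 : γ < 1)
    (m : ℕ) (hm : 1 ≤ m)
    (Hm Hmbar : Matrix (Fin n) (Fin n) ℝ)
    (hH : Hm = 1 - γ ^ m • P ^ m)
    (hB : Hmbar = Matrix.diagonal (fun i => Hm i i))
    (hsymm : Hm.IsSymm) :
    maxEig (Hmbar⁻¹ * Hm) / minEig (Hmbar⁻¹ * Hm) ≤ 2 * (maxEig Hm / minEig Hm) := by
  have : NeZero n := ⟨by omega⟩
  have hPm := pow_mem (mem_rowStochastic_iff_sum.mpr ⟨hP0, hP1⟩) m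
  set K := γ ^ m • P ^ m
  have hK0 : ∀ i j, 0 ≤ K i j := fun i j =>
    mul_nonneg (pow_nonneg hγ0 m) (nonneg_of_mem_rowStochastic hPm)
  have hKrow : ∀ i, ∑ j, K i j = γ ^ m := fun i => by
    simp only [K, Matrix.smul_apply, smul_eq_mul, ← Finset.mul_sum,
      sum_row_of_mem_rowStochastic hPm, mul_one]
  have hKsymm : K.IsSymm := by
    simpa [hH] using isSymm_one.sub hsymm
  have hγm : γ ^ m < 1 := pow_lt_one₀ hγ0 hγ1 (by omega)
  subst hB hH
  refine maxEig_div_minEig_diagonal_inv_mul_le (isHermitian_iff_isSymm.mpr hsymm)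
    (fun x hx => ?_) (posSemidef_two_smul_diagonal_diag_one_sub hKsymm hK0 hKrow hγm.le)
  exact (sub_pos.mpr hγm).trans_le <| le_of_mem_spectrum_of_forall_mul_dotProduct_self_le
    (one_sub_mul_dotProduct_self_le hKsymm hK0 hKrow) hx
end

section
/- Let P be an n×n row-stochastic real matrix (with n ≥ 1), let γ ∈ [0,1) and λ ∈ [0,1], and set H_λ = (I - γλP)⁻¹(I - γP). Then I - H_λ = γ(1-λ)(I - γλP)⁻¹P, every entry of I - H_λ is nonnegative, and every diagonal entry of H_λ lies in the interval (0, 1]. -/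
/-!
For `0 ≤ c < 1` the Neumann series `∑ cᵏ Pᵏ` converges (in the `ℓ∞` operator norm `‖P‖ ≤ 1`) to
`(1 - c • P)⁻¹`, so this inverse is entrywise nonnegative, and since `P 𝟙 = 𝟙` its row sums
are `(1 - c)⁻¹`. Writing `1 = A⁻¹ A` with `A = 1 - γλP` gives `1 - H_λ = γ(1 - λ) A⁻¹ P`, an
entrywise nonnegative matrix whose diagonal entries are at most `γ(1 - λ)/(1 - γλ) < 1`.
-/

open Matrix

namespace Matrix

variable {ι : Type*} [Fintype ι]

theorem apply_le_mulVec_one {M : Matrix ι ι ℝ} (hM : ∀ i j, 0 ≤ M i j) (i j : ι) :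
    M i j ≤ (M *ᵥ 1) i := by
  simp only [mulVec, dotProduct, Pi.one_apply, mul_one]
  exact Finset.single_le_sum (fun k _ => hM i k) (Finset.mem_univ j)

variable [DecidableEq ι]

theorem one_sub_inv_mul_one_sub_smul {R : Type*} [CommRing R] (P : Matrix ι ι R) (a b : R)
    (h : IsUnit (1 - a • P)) :
    1 - (1 - a • P)⁻¹ * (1 - b • P) = (b - a) • ((1 - a • P)⁻¹ * P) := by
  have hinv : (1 - a • P)⁻¹ * (1 - a • P) = 1 :=
    nonsing_inv_mul _ ((isUnit_iff_isUnit_det _).1 h)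
  calc 1 - (1 - a • P)⁻¹ * (1 - b • P)
      = (1 - a • P)⁻¹ * ((1 - a • P) - (1 - b • P)) := by
        rw [Matrix.mul_sub _ (1 - a • P), hinv]
    _ = (b - a) • ((1 - a • P)⁻¹ * P) := by rw [← mul_smul_comm, sub_smul]; congr 1; abel

section LinftyOpNorm

attribute [local instance] Matrix.linftyOpNormedRing Matrix.linftyOpNormedAlgebra

variable {P : Matrix ι ι ℝ} {c : ℝ}

theorem linfty_opNorm_le_one_of_mem_rowStochastic (hP : P ∈ rowStochastic ℝ ι) : ‖P‖ ≤ 1 := by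
  rw [linfty_opNorm_def, NNReal.coe_le_one, Finset.sup_le_iff]
  intro i _
  rw [← NNReal.coe_le_one, NNReal.coe_sum]
  simp_rw [coe_nnnorm, Real.norm_of_nonneg (nonneg_of_mem_rowStochastic hP),
    sum_row_of_mem_rowStochastic hP i, le_refl]

theorem norm_smul_lt_one_of_mem_rowStochastic (hP : P ∈ rowStochastic ℝ ι) (hc : |c| < 1) :
    ‖c • P‖ < 1 :=
  calc ‖c • P‖ ≤ |c| * 1 := by
        rw [norm_smul, Real.norm_eq_abs]
        exact mul_le_mul_of_nonneg_left
          (linfty_opNorm_le_one_of_mem_rowStochastic hP) (abs_nonneg c)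
    _ < 1 := by rwa [mul_one]

theorem isUnit_one_sub_smul_of_mem_rowStochastic (hP : P ∈ rowStochastic ℝ ι) (hc : |c| < 1) :
    IsUnit (1 - c • P) :=
  have : CompleteSpace (Matrix ι ι ℝ) := FiniteDimensional.complete ℝ _
  isUnit_one_sub_of_norm_lt_one (norm_smul_lt_one_of_mem_rowStochastic hP hc)

theorem hasSum_smul_pow_of_mem_rowStochastic (hP : P ∈ rowStochastic ℝ ι) (hc : |c| < 1) :
    HasSum (fun k => (c • P) ^ k) (1 - c • P)⁻¹ := by
  have : CompleteSpace (Matrix ι ι ℝ) := FiniteDimensional.complete ℝ _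
  rw [nonsing_inv_eq_ringInverse]
  exact hasSum_geom_series_inverse _ (norm_smul_lt_one_of_mem_rowStochastic hP hc)

end LinftyOpNorm

variable {P : Matrix ι ι ℝ} {c : ℝ}

theorem inv_one_sub_smul_nonneg_of_mem_rowStochastic (hP : P ∈ rowStochastic ℝ ι)
    (hc0 : 0 ≤ c) (hc1 : c < 1) (i j : ι) : 0 ≤ (1 - c • P)⁻¹ i j := by
  have hsum := hasSum_smul_pow_of_mem_rowStochastic hP (abs_lt.2 ⟨by linarith, hc1⟩)
  refine (Pi.hasSum.1 (Pi.hasSum.1 hsum i) j).nonneg fun k => ?_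
  rw [smul_pow, smul_apply, smul_eq_mul]
  exact mul_nonneg (pow_nonneg hc0 k) (nonneg_of_mem_rowStochastic (pow_mem hP k))

theorem inv_one_sub_smul_mulVec_one_of_mem_rowStochastic (hP : P ∈ rowStochastic ℝ ι)
    (hA : IsUnit (1 - c • P)) (hc : c ≠ 1) : (1 - c • P)⁻¹ *ᵥ 1 = (1 - c)⁻¹ • 1 := by
  have hrow : (1 - c • P) *ᵥ 1 = (1 - c) • 1 := by
    rw [sub_mulVec, one_mulVec, smul_mulVec, one_vecMul_of_mem_rowStochastic hP, sub_smul, one_smul]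
  have : (1 - c) • ((1 - c • P)⁻¹ *ᵥ 1) = 1 := by
    rw [← mulVec_smul (1 - c • P)⁻¹ (1 - c), ← hrow, mulVec_mulVec,
      nonsing_inv_mul _ ((isUnit_iff_isUnit_det _).1 hA), one_mulVec]
  rwa [eq_inv_smul_iff₀ (sub_ne_zero.2 hc.symm)]

theorem inv_one_sub_smul_mul_nonneg_of_mem_rowStochastic (hP : P ∈ rowStochastic ℝ ι)
    (hc0 : 0 ≤ c) (hc1 : c < 1) (i j : ι) : 0 ≤ ((1 - c • P)⁻¹ * P) i j :=
  Finset.sum_nonneg fun k _ =>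
    mul_nonneg (inv_one_sub_smul_nonneg_of_mem_rowStochastic hP hc0 hc1 i k)
      (nonneg_of_mem_rowStochastic hP)

theorem inv_one_sub_smul_mul_apply_le_of_mem_rowStochastic (hP : P ∈ rowStochastic ℝ ι)
    (hc0 : 0 ≤ c) (hc1 : c < 1) (i j : ι) : ((1 - c • P)⁻¹ * P) i j ≤ (1 - c)⁻¹ := by
  have hA := isUnit_one_sub_smul_of_mem_rowStochastic hP (abs_lt.2 ⟨by linarith, hc1⟩)
  have hrow : ((1 - c • P)⁻¹ * P) *ᵥ 1 = (1 - c)⁻¹ • 1 := by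
    rw [← mulVec_mulVec, one_vecMul_of_mem_rowStochastic hP,
      inv_one_sub_smul_mulVec_one_of_mem_rowStochastic hP hA hc1.ne]
  simpa [hrow] using
    apply_le_mulVec_one (inv_one_sub_smul_mul_nonneg_of_mem_rowStochastic hP hc0 hc1) i j

end Matrix

theorem stmt_14_general {n : ℕ} (P : Matrix (Fin n) (Fin n) ℝ)
    (hP0 : ∀ i j, 0 ≤ P i j) (hP1 : ∀ i, ∑ j, P i j = 1)
    (γ : ℝ) (hγ0 : 0 ≤ γ) (hγ1 : γ < 1)
    (lam : ℝ) (hl0 : 0 ≤ lam) (hl1 : lam ≤ 1)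
    (Hlam : Matrix (Fin n) (Fin n) ℝ)
    (hH : Hlam = (1 - (γ * lam) • P)⁻¹ * (1 - γ • P)) :
    1 - Hlam = (γ * (1 - lam)) • ((1 - (γ * lam) • P)⁻¹ * P) ∧
    (∀ i j, 0 ≤ (1 - Hlam) i j) ∧
    ∀ i, 0 < Hlam i i ∧ Hlam i i ≤ 1 := by
  have hP : P ∈ rowStochastic ℝ (Fin n) := mem_rowStochastic_iff_sum.2 ⟨hP0, hP1⟩
  have hc0 : 0 ≤ γ * lam := mul_nonneg hγ0 hl0
  have hc1 : γ * lam < 1 := by nlinarith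
  have hA := isUnit_one_sub_smul_of_mem_rowStochastic hP (abs_lt.2 ⟨by linarith, hc1⟩)
  have hM0 := inv_one_sub_smul_mul_nonneg_of_mem_rowStochastic hP hc0 hc1
  have hM1 := inv_one_sub_smul_mul_apply_le_of_mem_rowStochastic hP hc0 hc1
  have hcoef : 0 ≤ γ * (1 - lam) := mul_nonneg hγ0 (by linarith)
  have hIH : 1 - Hlam = (γ * (1 - lam)) • ((1 - (γ * lam) • P)⁻¹ * P) := by
    rw [hH, one_sub_inv_mul_one_sub_smul P _ _ hA]
    congr 1
    ring
  refine ⟨hIH, fun i j => ?_, fun i => ?_⟩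
  · rw [hIH]
    exact mul_nonneg hcoef (hM0 i j)
  have hdiag := congrFun₂ hIH i i
  simp only [Matrix.sub_apply, one_apply_eq, Matrix.smul_apply, smul_eq_mul] at hdiag
  have hlt : γ * (1 - lam) * (1 - γ * lam)⁻¹ < 1 := by
    rw [← div_eq_mul_inv, div_lt_one (by linarith)]
    nlinarith
  constructor
  · nlinarith [mul_le_mul_of_nonneg_left (hM1 i i) hcoef]
  · nlinarith [mul_nonneg hcoef (hM0 i i)]

/-- For a row-stochastic `P`, `γ ∈ [0,1)`, `λ ∈ [0,1]`, and
`H_λ = (I - γλP)⁻¹(I - γP)`: `I - H_λ = γ(1-λ)(I - γλP)⁻¹P`, every entry of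
`I - H_λ` is nonnegative, and every diagonal entry of `H_λ` lies in `(0, 1]`. -/
theorem stmt_14 {n : ℕ} (hn : 1 ≤ n) (P : Matrix (Fin n) (Fin n) ℝ)
    (hP0 : ∀ i j, 0 ≤ P i j) (hP1 : ∀ i, ∑ j, P i j = 1)
    (γ : ℝ) (hγ0 : 0 ≤ γ) (hγ1 : γ < 1)
    (lam : ℝ) (hl0 : 0 ≤ lam) (hl1 : lam ≤ 1)
    (Hlam : Matrix (Fin n) (Fin n) ℝ)
    (hH : Hlam = (1 - (γ * lam) • P)⁻¹ * (1 - γ • P)) :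
    1 - Hlam = (γ * (1 - lam)) • ((1 - (γ * lam) • P)⁻¹ * P) ∧
    (∀ i j, 0 ≤ (1 - Hlam) i j) ∧
    ∀ i, 0 < Hlam i i ∧ Hlam i i ≤ 1 :=
  stmt_14_general P hP0 hP1 γ hγ0 hγ1 lam hl0 hl1 Hlam hH
end

section
/- Let P be an n×n row-stochastic real matrix (with n ≥ 1), let γ ∈ [0,1) and λ ∈ [0,1], and set H_λ = (I - γλP)⁻¹(I - γP). Then H_λ is invertible with H_λ⁻¹ = (I - γP)⁻¹(I - γλP), and every entry of H_λ⁻¹ is nonnegative. -/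
open Matrix
open scoped NNReal

attribute [local instance] Matrix.linftyOpNormedRing Matrix.linftyOpNormedAlgebra

section aux
variable {n : ℕ}

lemma pow_entry_nonneg (P : Matrix (Fin n) (Fin n) ℝ) (hP0 : ∀ i j, 0 ≤ P i j) :
    ∀ k i j, 0 ≤ (P ^ k) i j := by
  intro k
  induction k with
  | zero => intro i j; simp [Matrix.one_apply]; positivity
  | succ k ih =>
    intro i j
    rw [pow_succ, Matrix.mul_apply]
    exact Finset.sum_nonneg fun l _ => mul_nonneg (ih i l) (hP0 l j)

lemma neumann (P : Matrix (Fin n) (Fin n) ℝ)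
    (hP0 : ∀ i j, 0 ≤ P i j) (hP1 : ∀ i, ∑ j, P i j = 1)
    {c : ℝ} (h0 : 0 ≤ c) (h1 : c < 1) :
    IsUnit (1 - c • P) ∧ ∀ i j, 0 ≤ (1 - c • P)⁻¹ i j := by
  have hPn : ‖P‖ ≤ 1 := by
    rw [Matrix.linfty_opNorm_def]
    have : ((Finset.univ : Finset (Fin n)).sup fun i => ∑ j, ‖P i j‖₊) ≤ 1 := by
      apply Finset.sup_le
      intro i _
      have : (∑ j, ‖P i j‖₊ : ℝ≥0) = (1 : ℝ≥0) := by
        have := hP1 i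
        ext
        push_cast
        rw [← this]
        exact Finset.sum_congr rfl fun j _ => by
          rw [Real.norm_of_nonneg (hP0 i j)]
      exact this.le
    exact_mod_cast this
  have hx : ‖c • P‖ < 1 := by
    rw [norm_smul, Real.norm_of_nonneg h0]
    calc c * ‖P‖ ≤ c * 1 := by nlinarith [norm_nonneg P]
    _ < 1 := by linarith
  set x := c • P with hxdef
  have hsum : Summable (fun k : ℕ => x ^ k) := summable_geometric_of_norm_lt_one hx
  have hmr : (1 - x) * (∑' k : ℕ, x ^ k) = 1 := mul_neg_geom_series x hx
  have hinv : (1 - x)⁻¹ = ∑' k : ℕ, x ^ k := Matrix.inv_eq_right_inv hmr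
  refine ⟨(Units.oneSub x hx).isUnit, ?_⟩
  intro i j
  rw [hinv]
  have hs : HasSum (fun k : ℕ => (x ^ k) i j) ((∑' k : ℕ, x ^ k) i j) := by
    have := hsum.hasSum
    exact (Pi.hasSum.1 ((Pi.hasSum.1 this) i)) j
  refine hs.nonneg fun k => ?_
  rw [hxdef, smul_pow, Matrix.smul_apply, smul_eq_mul]
  exact mul_nonneg (pow_nonneg h0 k) (pow_entry_nonneg P hP0 k i j)

end aux

/-- For a row-stochastic `P`, `γ ∈ [0,1)`, `λ ∈ [0,1]`, and
`H_λ = (I - γλP)⁻¹(I - γP)`: `H_λ` is invertible with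
`H_λ⁻¹ = (I - γP)⁻¹(I - γλP)`, and every entry of `H_λ⁻¹` is nonnegative. -/
theorem stmt_15 {n : ℕ} (hn : 1 ≤ n) (P : Matrix (Fin n) (Fin n) ℝ)
    (hP0 : ∀ i j, 0 ≤ P i j) (hP1 : ∀ i, ∑ j, P i j = 1)
    (γ : ℝ) (hγ0 : 0 ≤ γ) (hγ1 : γ < 1)
    (lam : ℝ) (hl0 : 0 ≤ lam) (hl1 : lam ≤ 1)
    (Hlam : Matrix (Fin n) (Fin n) ℝ)
    (hH : Hlam = (1 - (γ * lam) • P)⁻¹ * (1 - γ • P)) :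
    IsUnit Hlam ∧
    Hlam⁻¹ = (1 - γ • P)⁻¹ * (1 - (γ * lam) • P) ∧
    ∀ i j, 0 ≤ Hlam⁻¹ i j := by
  have hgl0 : 0 ≤ γ * lam := mul_nonneg hγ0 hl0
  have hgl1 : γ * lam < 1 := lt_of_le_of_lt (by nlinarith) hγ1
  obtain ⟨hu1, hnn1⟩ := neumann P hP0 hP1 hgl0 hgl1
  obtain ⟨hu2, hnn2⟩ := neumann P hP0 hP1 hγ0 hγ1
  have huH : IsUnit Hlam := by
    rw [hH]; have hd1 : IsUnit (1 - (γ * lam) • P).det := (Matrix.isUnit_iff_isUnit_det _).1 hu1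
    have hd2 : IsUnit (1 - γ • P).det := (Matrix.isUnit_iff_isUnit_det _).1 hu2
    have : IsUnit ((1 - (γ * lam) • P)⁻¹) :=
      (Matrix.isUnit_iff_isUnit_det _).2 (Matrix.isUnit_nonsing_inv_det _ hd1)
    exact this.mul hu2
  have hinv : Hlam⁻¹ = (1 - γ • P)⁻¹ * (1 - (γ * lam) • P) := by
    rw [hH, Matrix.mul_inv_rev, Matrix.nonsing_inv_nonsing_inv _ ((Matrix.isUnit_iff_isUnit_det _).1 hu1)]
  refine ⟨huH, hinv, ?_⟩
  intro i j
  rw [hinv]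
  have key : (1 - γ • P)⁻¹ * (1 - (γ * lam) • P)
      = 1 + (γ - γ * lam) • ((1 - γ • P)⁻¹ * P) := by
    have h1 : (1 : Matrix (Fin n) (Fin n) ℝ) - (γ * lam) • P
        = (1 - γ • P) + (γ - γ * lam) • P := by
      rw [sub_smul]; ring_nf; abel
    rw [h1, Matrix.mul_add, Matrix.nonsing_inv_mul _ ((Matrix.isUnit_iff_isUnit_det _).1 hu2), Matrix.mul_smul]
  rw [key, Matrix.add_apply, Matrix.smul_apply, smul_eq_mul]
  have : 0 ≤ ((1 - γ • P)⁻¹ * P) i j := by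
    rw [Matrix.mul_apply]
    exact Finset.sum_nonneg fun l _ => mul_nonneg (hnn2 i l) (hP0 l j)
  have h1nn : 0 ≤ (1 : Matrix (Fin n) (Fin n) ℝ) i j := by
    rw [Matrix.one_apply]; positivity
  have : 0 ≤ (γ - γ * lam) * ((1 - γ • P)⁻¹ * P) i j :=
    mul_nonneg (by nlinarith) this
  linarith
end

section
/- Let P be an n×n row-stochastic real matrix (with n ≥ 1), let γ ∈ [0,1) and λ ∈ [0,1], and set H_λ = (I - γλP)⁻¹(I - γP) and H̄_λ = diag(H_λ). Then ρ(I - H̄_λ⁻¹ H_λ) ≤ ρ(I - H_λ) < 1. -/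
/-!
Write `N = I - H_λ = γ(1-λ)(I - γλP)⁻¹P`. Expanding `(I - γλP)⁻¹` as a Neumann series shows
`N ≥ 0` entrywise, and since every row of `P` sums to `1`, every row of `N` sums to
`c = γ(1-λ)/(1-γλ) < 1`. A nonnegative matrix with constant row sums `c` has spectral radius
exactly `c`: the all-ones vector is an eigenvector, and Gershgorin's discs bound every eigenvalue
by the largest absolute row sum. The Jacobi matrix `I - H̄_λ⁻¹H_λ` has zero diagonal and
off-diagonal entries `N i j / (1 - N i i) ≥ 0`, so its absolute row sums are
`(c - N i i)/(1 - N i i) ≤ c`, and Gershgorin again gives `ρ(I - H̄_λ⁻¹H_λ) ≤ c = ρ(I - H_λ)`.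
-/

open Matrix

variable {ι : Type*} [Fintype ι] [DecidableEq ι]

section Spectrum

open Module.End

theorem Matrix.exists_norm_le_sum_abs_of_mem_spectrum_map_ofReal {A : Matrix ι ι ℝ} {μ : ℂ}
    (hμ : μ ∈ spectrum ℂ (A.map (Complex.ofReal ·))) : ∃ i, ‖μ‖ ≤ ∑ j, |A i j| := by
  rw [← spectrum_toLin', ← hasEigenvalue_iff_mem_spectrum] at hμ
  obtain ⟨i, hi⟩ := eigenvalue_mem_ball hμ
  rw [Metric.mem_closedBall, dist_eq_norm] at hi
  simp only [map_apply, Complex.norm_real, Real.norm_eq_abs] at hi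
  refine ⟨i, ?_⟩
  calc ‖μ‖ ≤ |A i i| + ‖μ - A i i‖ := by simpa using norm_le_norm_add_norm_sub' μ (A i i : ℂ)
    _ ≤ |A i i| + ∑ j ∈ Finset.univ.erase i, |A i j| := by gcongr
    _ = ∑ j, |A i j| := Finset.add_sum_erase _ (fun j ↦ |A i j|) (Finset.mem_univ i)

theorem Matrix.ofReal_mem_spectrum_map_ofReal_of_forall_sum_eq [Nonempty ι] {A : Matrix ι ι ℝ}
    {c : ℝ} (h : ∀ i, ∑ j, A i j = c) : (c : ℂ) ∈ spectrum ℂ (A.map (Complex.ofReal ·)) := by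
  rw [← spectrum_toLin', ← hasEigenvalue_iff_mem_spectrum]
  refine hasEigenvalue_of_hasEigenvector (x := 1) ⟨mem_eigenspace_iff.2 ?_, one_ne_zero⟩
  ext i
  simp [toLin'_apply, mulVec, dotProduct, ← Complex.ofReal_sum, h]

end Spectrum

section SpecRad

variable {n : ℕ}

theorem specRad_le_of_forall_sum_abs_le {A : Matrix (Fin n) (Fin n) ℝ} {r : ℝ} (hr : 0 ≤ r)
    (h : ∀ i, ∑ j, |A i j| ≤ r) : specRad A ≤ r := by
  refine Real.sSup_le ?_ hr
  rintro _ ⟨μ, hμ, rfl⟩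
  obtain ⟨i, hi⟩ := exists_norm_le_sum_abs_of_mem_spectrum_map_ofReal hμ
  exact hi.trans (h i)

theorem norm_le_specRad_of_mem_spectrum {A : Matrix (Fin n) (Fin n) ℝ} {μ : ℂ}
    (hμ : μ ∈ spectrum ℂ (A.map (Complex.ofReal ·))) : ‖μ‖ ≤ specRad A := by
  refine le_csSup ⟨∑ i, ∑ j, |A i j|, ?_⟩ ⟨μ, hμ, rfl⟩
  rintro _ ⟨ν, hν, rfl⟩
  obtain ⟨i, hi⟩ := exists_norm_le_sum_abs_of_mem_spectrum_map_ofReal hν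
  exact hi.trans <| Finset.single_le_sum (f := fun i ↦ ∑ j, |A i j|)
    (fun i _ ↦ Finset.sum_nonneg fun j _ ↦ abs_nonneg _) (Finset.mem_univ i)

theorem specRad_eq_of_forall_nonneg_of_forall_sum_eq [NeZero n] {A : Matrix (Fin n) (Fin n) ℝ}
    {c : ℝ} (h0 : ∀ i j, 0 ≤ A i j) (h : ∀ i, ∑ j, A i j = c) : specRad A = c := by
  have hc : 0 ≤ c := h 0 ▸ Finset.sum_nonneg fun j _ ↦ h0 0 j
  refine le_antisymm (specRad_le_of_forall_sum_abs_le hc fun i ↦ ?_) ?_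
  · simp_rw [abs_of_nonneg (h0 i _), h i, le_rfl]
  · simpa [abs_of_nonneg hc] using
      norm_le_specRad_of_mem_spectrum (ofReal_mem_spectrum_map_ofReal_of_forall_sum_eq h)

end SpecRad

section NonnegInverse

attribute [local instance] Matrix.linftyOpNormedAddCommGroup Matrix.linftyOpNormedRing
  Matrix.linftyOpNormedAlgebra

variable {Q : Matrix ι ι ℝ}

theorem Matrix.linfty_opNorm_lt_one_of_forall_sum_lt_one (hQ0 : ∀ i j, 0 ≤ Q i j)
    (hQ : ∀ i, ∑ j, Q i j < 1) : ‖Q‖ < 1 := by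
  rw [linfty_opNorm_def, ← NNReal.coe_one, NNReal.coe_lt_coe,
    Finset.sup_lt_iff (bot_lt_iff_ne_bot.2 one_ne_zero)]
  intro i _
  rw [← NNReal.coe_lt_coe, NNReal.coe_sum]
  simpa [Real.norm_of_nonneg (hQ0 i _)] using hQ i

theorem Matrix.isUnit_det_one_sub_of_forall_sum_lt_one (hQ0 : ∀ i j, 0 ≤ Q i j)
    (hQ : ∀ i, ∑ j, Q i j < 1) : IsUnit (1 - Q).det :=
  (isUnit_iff_isUnit_det _).1 <|
    isUnit_one_sub_of_norm_lt_one (linfty_opNorm_lt_one_of_forall_sum_lt_one hQ0 hQ)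

theorem Matrix.inv_one_sub_apply_nonneg_of_forall_sum_lt_one (hQ0 : ∀ i j, 0 ≤ Q i j)
    (hQ : ∀ i, ∑ j, Q i j < 1) (i j : ι) : 0 ≤ (1 - Q)⁻¹ i j := by
  have hsum : HasSum (fun k ↦ Q ^ k) (1 - Q)⁻¹ := by
    rw [nonsing_inv_eq_ringInverse]
    exact hasSum_geom_series_inverse Q (linfty_opNorm_lt_one_of_forall_sum_lt_one hQ0 hQ)
  exact hasSum_le (fun k ↦ pow_apply_nonneg hQ0 k i j) hasSum_zero
    (Pi.hasSum.1 (Pi.hasSum.1 hsum i) j)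

end NonnegInverse

theorem Matrix.sum_inv_apply_of_forall_sum_eq {K : Type*} [Field K] {A : Matrix ι ι K}
    (hA : IsUnit A.det) {s : K} (h : ∀ i, ∑ j, A i j = s) (i : ι) : ∑ j, A⁻¹ i j = s⁻¹ := by
  have hA1 : A *ᵥ 1 = s • 1 := by
    ext k
    simp [mulVec, dotProduct, h]
  have hinv1 : s • (A⁻¹ *ᵥ 1) = 1 := by
    rw [← mulVec_smul, ← hA1, mulVec_mulVec, nonsing_inv_mul _ hA, one_mulVec]
  have := congrFun hinv1 i
  simp only [Pi.smul_apply, mulVec, dotProduct, Pi.one_apply, mul_one, smul_eq_mul] at this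
  exact eq_inv_of_mul_eq_one_right this

section Stochastic

variable {P : Matrix ι ι ℝ} (hP : P ∈ rowStochastic ℝ ι) {a : ℝ}
include hP

theorem Matrix.sum_smul_apply_of_mem_rowStochastic (i : ι) : ∑ j, (a • P) i j = a := by
  simp [← Finset.mul_sum, sum_row_of_mem_rowStochastic hP]

theorem Matrix.isUnit_det_one_sub_smul_of_mem_rowStochastic (ha0 : 0 ≤ a) (ha1 : a < 1) :
    IsUnit (1 - a • P).det :=
  isUnit_det_one_sub_of_forall_sum_lt_one (fun _ _ ↦ mul_nonneg ha0 (hP.1 _ _))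
    fun i ↦ (sum_smul_apply_of_mem_rowStochastic hP i).trans_lt ha1

theorem Matrix.inv_one_sub_smul_apply_nonneg_of_mem_rowStochastic (ha0 : 0 ≤ a) (ha1 : a < 1)
    (i j : ι) : 0 ≤ (1 - a • P)⁻¹ i j :=
  inv_one_sub_apply_nonneg_of_forall_sum_lt_one (fun _ _ ↦ mul_nonneg ha0 (hP.1 _ _))
    (fun i ↦ (sum_smul_apply_of_mem_rowStochastic hP i).trans_lt ha1) i j

theorem Matrix.sum_inv_one_sub_smul_apply_of_mem_rowStochastic (ha0 : 0 ≤ a) (ha1 : a < 1)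
    (i : ι) : ∑ j, (1 - a • P)⁻¹ i j = (1 - a)⁻¹ := by
  refine sum_inv_apply_of_forall_sum_eq (isUnit_det_one_sub_smul_of_mem_rowStochastic hP ha0 ha1)
    (fun i ↦ ?_) i
  simp_rw [sub_apply, Finset.sum_sub_distrib, sum_smul_apply_of_mem_rowStochastic hP]
  simp [one_apply]

end Stochastic

noncomputable def tdUpdate (P : Matrix ι ι ℝ) (γ lam : ℝ) : Matrix ι ι ℝ :=
  (1 - (γ * lam) • P)⁻¹ * (1 - γ • P)

theorem one_sub_tdUpdate {P : Matrix ι ι ℝ} {γ lam : ℝ} (h : IsUnit (1 - (γ * lam) • P).det) :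
    1 - tdUpdate P γ lam = (γ * (1 - lam)) • ((1 - (γ * lam) • P)⁻¹ * P) := by
  calc 1 - tdUpdate P γ lam
      = (1 - (γ * lam) • P)⁻¹ * ((1 - (γ * lam) • P) - (1 - γ • P)) := by
        rw [mul_sub, nonsing_inv_mul _ h, tdUpdate]
    _ = _ := by
        rw [← mul_smul_comm]
        congr 1
        module

section TDUpdate

variable {P : Matrix ι ι ℝ} (hP : P ∈ rowStochastic ℝ ι) {γ lam : ℝ}
    (hγ0 : 0 ≤ γ) (hγ1 : γ < 1) (hl0 : 0 ≤ lam) (hl1 : lam ≤ 1)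
include hP hγ0 hγ1 hl0 hl1

theorem one_sub_tdUpdate_apply_nonneg (i j : ι) : 0 ≤ (1 - tdUpdate P γ lam) i j := by
  have ha0 : 0 ≤ γ * lam := mul_nonneg hγ0 hl0
  have ha1 : γ * lam < 1 := by nlinarith
  rw [one_sub_tdUpdate (isUnit_det_one_sub_smul_of_mem_rowStochastic hP ha0 ha1)]
  exact mul_nonneg (mul_nonneg hγ0 (sub_nonneg.2 hl1)) <| Finset.sum_nonneg fun k _ ↦
    mul_nonneg (inv_one_sub_smul_apply_nonneg_of_mem_rowStochastic hP ha0 ha1 i k) (hP.1 k j)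

theorem sum_one_sub_tdUpdate_apply (i : ι) :
    ∑ j, (1 - tdUpdate P γ lam) i j = γ * (1 - lam) / (1 - γ * lam) := by
  have ha0 : 0 ≤ γ * lam := mul_nonneg hγ0 hl0
  have ha1 : γ * lam < 1 := by nlinarith
  simp_rw [one_sub_tdUpdate (isUnit_det_one_sub_smul_of_mem_rowStochastic hP ha0 ha1),
    Matrix.smul_apply, mul_apply, smul_eq_mul, ← Finset.mul_sum]
  rw [Finset.sum_comm]
  simp_rw [← Finset.mul_sum, sum_row_of_mem_rowStochastic hP, mul_one,
    sum_inv_one_sub_smul_apply_of_mem_rowStochastic hP ha0 ha1, div_eq_mul_inv]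

end TDUpdate

theorem Matrix.sum_abs_one_sub_inv_diagonal_mul_apply_le {H : Matrix ι ι ℝ} {c : ℝ}
    (h0 : ∀ i j, 0 ≤ (1 - H) i j) (hsum : ∀ i, ∑ j, (1 - H) i j ≤ c) (hc : c < 1) (i : ι) :
    ∑ j, |(1 - (diagonal fun i ↦ H i i)⁻¹ * H) i j| ≤ c := by
  set N := 1 - H with hN
  set J := 1 - (diagonal fun i ↦ H i i)⁻¹ * H with hJ
  have hNii : ∀ i, N i i ≤ c := fun i ↦
    (Finset.single_le_sum (fun j _ ↦ h0 i j) (Finset.mem_univ i)).trans (hsum i)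
  have hHii : ∀ i, H i i = 1 - N i i := by simp [hN]
  have hpos : ∀ i, 0 < H i i := fun i ↦ by linarith [hHii i, hNii i]
  have hinv : (diagonal fun i ↦ H i i)⁻¹ = diagonal fun i ↦ (H i i)⁻¹ :=
    inv_eq_left_inv <| by simp [diagonal_mul_diagonal, inv_mul_cancel₀ (hpos _).ne']
  have hentry : ∀ j, J i j = (1 : Matrix ι ι ℝ) i j - H i j / H i i := by
    intro j
    simp [hJ, hinv, diagonal_mul, div_eq_inv_mul]
  have hoff : ∀ j ∈ Finset.univ.erase i, |J i j| = N i j / H i i := by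
    intro j hj
    have hij := (Finset.ne_of_mem_erase hj).symm
    have hNij : N i j = -H i j := by simp [hN, one_apply_ne hij]
    rw [hentry, one_apply_ne hij, zero_sub, ← neg_div, ← hNij,
      abs_of_nonneg (div_nonneg (h0 i j) (hpos i).le)]
  rw [← Finset.add_sum_erase _ _ (Finset.mem_univ i), Finset.sum_congr rfl hoff, hentry,
    one_apply_eq, div_self (hpos i).ne', sub_self, abs_zero, zero_add, ← Finset.sum_div,
    Finset.sum_erase_eq_sub (Finset.mem_univ i), div_le_iff₀ (hpos i), hHii]
  nlinarith [hsum i, h0 i i]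

/-- For a row-stochastic `P`, `γ ∈ [0,1)`, `λ ∈ [0,1]`,
`H_λ = (I - γλP)⁻¹(I - γP)`, `H̄_λ = diag(H_λ)`:
`ρ(I - H̄_λ⁻¹H_λ) ≤ ρ(I - H_λ) < 1`. -/
theorem stmt_16 {n : ℕ} (hn : 1 ≤ n) (P : Matrix (Fin n) (Fin n) ℝ)
    (hP0 : ∀ i j, 0 ≤ P i j) (hP1 : ∀ i, ∑ j, P i j = 1)
    (γ : ℝ) (hγ0 : 0 ≤ γ) (hγ1 : γ < 1)
    (lam : ℝ) (hl0 : 0 ≤ lam) (hl1 : lam ≤ 1)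
    (Hlam Hlambar : Matrix (Fin n) (Fin n) ℝ)
    (hH : Hlam = (1 - (γ * lam) • P)⁻¹ * (1 - γ • P))
    (hB : Hlambar = Matrix.diagonal (fun i => Hlam i i)) :
    specRad (1 - Hlambar⁻¹ * Hlam) ≤ specRad (1 - Hlam) ∧ specRad (1 - Hlam) < 1 := by
  have : NeZero n := ⟨by omega⟩
  have hP : P ∈ rowStochastic ℝ (Fin n) := mem_rowStochastic_iff_sum.2 ⟨hP0, hP1⟩
  have hHtd : Hlam = tdUpdate P γ lam := hH
  subst hB hHtd
  have hN0 := one_sub_tdUpdate_apply_nonneg hP hγ0 hγ1 hl0 hl1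
  have hNsum := sum_one_sub_tdUpdate_apply hP hγ0 hγ1 hl0 hl1
  have hγl : 0 < 1 - γ * lam := by nlinarith
  have hc0 : 0 ≤ γ * (1 - lam) / (1 - γ * lam) :=
    div_nonneg (mul_nonneg hγ0 (sub_nonneg.2 hl1)) hγl.le
  have hc1 : γ * (1 - lam) / (1 - γ * lam) < 1 := by
    rw [div_lt_one hγl]
    linarith
  rw [specRad_eq_of_forall_nonneg_of_forall_sum_eq hN0 hNsum]
  exact ⟨specRad_le_of_forall_sum_abs_le hc0 <|
    sum_abs_one_sub_inv_diagonal_mul_apply_le hN0 (fun i ↦ (hNsum i).le) hc1, hc1⟩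
end

section
/- Let P be an n×n row-stochastic real matrix (with n ≥ 1), let γ ∈ [0,1) and λ ∈ [0,1], and set H_λ = (I - γλP)⁻¹(I - γP) and H̄_λ = diag(H_λ). If H_λ is symmetric, then κ(H̄_λ⁻¹ H_λ) ≤ 2 κ(H_λ), where κ denotes the ratio of the largest to the smallest eigenvalue. -/
/-
Write `B = 1 - γλP`. As `P` is row-stochastic and `γλ < 1`, `Bx ≥ 0` forces `x ≥ 0` (look at a
smallest coordinate of `x`), so `B` is invertible with `B⁻¹ ≥ 0`. Hence
`H_λ = 1 - (γ - γλ) B⁻¹P` has nonpositive off-diagonal entries and all row sums equal to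
`s = (1 - γ)/(1 - γλ) > 0`. For a symmetric matrix `H` with these two properties the identities
`∑ᵢⱼ Hᵢⱼ (xᵢ ∓ xⱼ)² = 2 ∑ᵢ (∑ⱼ Hᵢⱼ) xᵢ² ∓ 2 xᵀHx` give `s ‖x‖² ≤ xᵀHx ≤ 2 ∑ᵢ Hᵢᵢ xᵢ²`.
A real eigenvalue `μ` of `H̄⁻¹H` with eigenvector `v` satisfies `vᵀHv = μ vᵀH̄v`. The upper
bound gives `μ ≤ 2`; the Rayleigh bounds `λ_min ‖v‖² ≤ vᵀHv` and `vᵀH̄v ≤ λ_max ‖v‖²` give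
`μ ≥ λ_min / λ_max`.
-/

open Matrix

open Finset

theorem Real.sSup_div_sInf_le_div_of_subset_Icc {S : Set ℝ} {a b : ℝ} (ha : 0 < a) (hb : 0 ≤ b)
    (hS : S ⊆ Set.Icc a b) : sSup S / sInf S ≤ b / a := by
  rcases S.eq_empty_or_nonempty with rfl | hne
  · simpa using div_nonneg hb ha.le -- `sSup ∅ = sInf ∅ = 0`
  exact div_le_div₀ hb (csSup_le hne fun x hx => (hS hx).2) ha (le_csInf hne fun x hx => (hS hx).1)

namespace Matrix

variable {ι : Type*} [Fintype ι]

section QuadraticForm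

variable {A : Matrix ι ι ℝ}

theorem dotProduct_mulVec_self_eq_sum_sum (x : ι → ℝ) :
    x ⬝ᵥ A *ᵥ x = ∑ i, ∑ j, A i j * (x i * x j) := by
  simp only [dotProduct, mulVec, mul_sum]
  exact sum_congr rfl fun i _ => sum_congr rfl fun j _ => by ring

theorem sum_mul_sq_pos {d v : ι → ℝ} (hd : ∀ i, 0 < d i) (hv : v ≠ 0) :
    0 < ∑ i, d i * v i ^ 2 := by
  obtain ⟨k, hk⟩ := Function.ne_iff.mp hv
  exact sum_pos' (fun i _ => mul_nonneg (hd i).le (sq_nonneg _))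
    ⟨k, mem_univ k, mul_pos (hd k) (pow_two_pos_of_ne_zero hk)⟩

theorem IsSymm.sum_sum_mul_sq_add_sq (hA : A.IsSymm) (x : ι → ℝ) :
    ∑ i, ∑ j, A i j * (x i ^ 2 + x j ^ 2) = 2 * ∑ i, (∑ j, A i j) * x i ^ 2 := by
  have hswap : ∑ i, ∑ j, A i j * x j ^ 2 = ∑ i, ∑ j, A i j * x i ^ 2 := by
    rw [sum_comm]
    simp only [hA.apply]
  simp only [mul_add, sum_add_distrib, hswap, sum_mul]
  ring

theorem IsSymm.sum_sum_mul_sub_sq (hA : A.IsSymm) (x : ι → ℝ) :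
    ∑ i, ∑ j, A i j * (x i - x j) ^ 2 =
      2 * ∑ i, (∑ j, A i j) * x i ^ 2 - 2 * (x ⬝ᵥ A *ᵥ x) := by
  rw [← hA.sum_sum_mul_sq_add_sq, dotProduct_mulVec_self_eq_sum_sum]
  simp only [mul_sum, ← sum_sub_distrib]
  exact sum_congr rfl fun i _ => sum_congr rfl fun j _ => by ring

theorem IsSymm.sum_sum_mul_add_sq (hA : A.IsSymm) (x : ι → ℝ) :
    ∑ i, ∑ j, A i j * (x i + x j) ^ 2 =
      2 * ∑ i, (∑ j, A i j) * x i ^ 2 + 2 * (x ⬝ᵥ A *ᵥ x) := by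
  rw [← hA.sum_sum_mul_sq_add_sq, dotProduct_mulVec_self_eq_sum_sum]
  simp only [mul_sum, ← sum_add_distrib]
  exact sum_congr rfl fun i _ => sum_congr rfl fun j _ => by ring

theorem IsSymm.mul_dotProduct_self_le_dotProduct_mulVec (hA : A.IsSymm)
    (hoff : ∀ i j, i ≠ j → A i j ≤ 0) {s : ℝ} (hrow : ∀ i, s ≤ ∑ j, A i j) (x : ι → ℝ) :
    s * (x ⬝ᵥ x) ≤ x ⬝ᵥ A *ᵥ x := by
  have hcross : ∑ i, ∑ j, A i j * (x i - x j) ^ 2 ≤ 0 :=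
    sum_nonpos fun i _ => sum_nonpos fun j _ => by
      rcases eq_or_ne i j with rfl | hij
      · simp
      · exact mul_nonpos_of_nonpos_of_nonneg (hoff i j hij) (sq_nonneg _)
  have hrows : s * (x ⬝ᵥ x) ≤ ∑ i, (∑ j, A i j) * x i ^ 2 := by
    rw [dotProduct, mul_sum]
    exact sum_le_sum fun i _ => by
      rw [← sq]
      exact mul_le_mul_of_nonneg_right (hrow i) (sq_nonneg _)
  linarith [hA.sum_sum_mul_sub_sq x]

theorem IsSymm.dotProduct_mulVec_le_two_mul_sum_diag (hA : A.IsSymm)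
    (hoff : ∀ i j, i ≠ j → A i j ≤ 0) (hrow : ∀ i, 0 ≤ ∑ j, A i j) (x : ι → ℝ) :
    x ⬝ᵥ A *ᵥ x ≤ 2 * ∑ i, A i i * x i ^ 2 := by
  classical
  have hcross : ∑ i, ∑ j, A i j * (x i + x j) ^ 2 ≤ ∑ i, A i i * (2 * x i) ^ 2 :=
    sum_le_sum fun i _ =>
      calc ∑ j, A i j * (x i + x j) ^ 2
          ≤ ∑ j, if i = j then A i i * (2 * x i) ^ 2 else 0 :=
            sum_le_sum fun j _ => by
              split_ifs with hij
              · subst hij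
                exact le_of_eq (by ring)
              · exact mul_nonpos_of_nonpos_of_nonneg (hoff i j hij) (sq_nonneg _)
        _ = A i i * (2 * x i) ^ 2 := by simp
  have hrows : 0 ≤ ∑ i, (∑ j, A i j) * x i ^ 2 :=
    sum_nonneg fun i _ => mul_nonneg (hrow i) (sq_nonneg _)
  have hfour : ∑ i, A i i * (2 * x i) ^ 2 = 4 * ∑ i, A i i * x i ^ 2 := by
    rw [mul_sum]
    exact sum_congr rfl fun i _ => by ring
  linarith [hA.sum_sum_mul_add_sq x]

end QuadraticForm

section Spectrum

variable [DecidableEq ι] {A : Matrix ι ι ℝ}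

theorem setOf_ofReal_mem_spectrum_map (A : Matrix ι ι ℝ) :
    {x : ℝ | (x : ℂ) ∈ spectrum ℂ (A.map (Complex.ofReal ·))} = spectrum ℝ A := by
  ext x
  simp only [Set.mem_ofPred_eq, spectrum.mem_iff, isUnit_iff_isUnit_det, not_iff_not]
  have : algebraMap ℂ _ (x : ℂ) - A.map (Complex.ofReal ·) =
      Complex.ofRealHom.mapMatrix (algebraMap ℝ _ x - A) := by
    ext i j
    simp [algebraMap_matrix_apply, apply_ite]
  rw [this, ← RingHom.map_det, isUnit_map_iff]

theorem exists_mulVec_eq_smul_of_mem_spectrum {μ : ℝ} (h : μ ∈ spectrum ℝ A) :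
    ∃ v ≠ 0, A *ᵥ v = μ • v := by
  rw [spectrum.mem_iff, isUnit_iff_isUnit_det, isUnit_iff_ne_zero, not_not,
    ← exists_mulVec_eq_zero_iff] at h
  obtain ⟨v, hv, h⟩ := h
  refine ⟨v, hv, ?_⟩
  rw [Algebra.algebraMap_eq_smul_one, sub_mulVec, smul_mulVec, one_mulVec, sub_eq_zero] at h
  exact h.symm

theorem le_of_mem_spectrum_of_forall_mul_dotProduct_self_le {c μ : ℝ}
    (h : ∀ x, c * (x ⬝ᵥ x) ≤ x ⬝ᵥ A *ᵥ x) (hμ : μ ∈ spectrum ℝ A) : c ≤ μ := by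
  obtain ⟨v, hv, hAv⟩ := exists_mulVec_eq_smul_of_mem_spectrum hμ
  have hvv : 0 < v ⬝ᵥ v := by simpa using dotProduct_star_self_pos_iff.mpr hv
  have := h v
  rw [hAv, dotProduct_smul, smul_eq_mul] at this
  exact le_of_mul_le_mul_right this hvv

theorem exists_dotProduct_mulVec_eq_of_mem_spectrum_diagonal_inv_mul {d : ι → ℝ}
    (hd : ∀ i, d i ≠ 0) {μ : ℝ} (hμ : μ ∈ spectrum ℝ ((diagonal d)⁻¹ * A)) :
    ∃ v ≠ 0, v ⬝ᵥ A *ᵥ v = μ * ∑ i, d i * v i ^ 2 := by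
  obtain ⟨v, hv, hAv⟩ := exists_mulVec_eq_smul_of_mem_spectrum hμ
  have hdet : IsUnit (diagonal d).det := by
    rw [det_diagonal, isUnit_iff_ne_zero]
    exact prod_ne_zero_iff.mpr fun i _ => hd i
  have hAv' : A *ᵥ v = diagonal d *ᵥ (μ • v) := by
    rw [← hAv, mulVec_mulVec, ← Matrix.mul_assoc, mul_nonsing_inv _ hdet, Matrix.one_mul]
  refine ⟨v, hv, ?_⟩
  simp only [hAv', dotProduct, mulVec_diagonal, Pi.smul_apply, smul_eq_mul, mul_sum]
  exact sum_congr rfl fun i _ => by ring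

open scoped MatrixOrder in
theorem IsSymm.sInf_spectrum_mul_le (hA : A.IsSymm) (x : ι → ℝ) :
    sInf (spectrum ℝ A) * (x ⬝ᵥ x) ≤ x ⬝ᵥ A *ᵥ x := by
  have h : algebraMap ℝ _ (sInf (spectrum ℝ A)) ≤ A :=
    algebraMap_le_of_le_spectrum (fun y hy => csInf_le A.finite_real_spectrum.bddBelow hy)
      (isHermitian_iff_isSymm.mpr hA).isSelfAdjoint
  simpa [Algebra.algebraMap_eq_smul_one, sub_mulVec, smul_mulVec, dotProduct_sub,
    dotProduct_smul] using (le_iff.mp h).dotProduct_mulVec_nonneg x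

open scoped MatrixOrder in
theorem IsSymm.le_sSup_spectrum_mul (hA : A.IsSymm) (x : ι → ℝ) :
    x ⬝ᵥ A *ᵥ x ≤ sSup (spectrum ℝ A) * (x ⬝ᵥ x) := by
  have h : A ≤ algebraMap ℝ _ (sSup (spectrum ℝ A)) :=
    le_algebraMap_of_spectrum_le (fun y hy => le_csSup A.finite_real_spectrum.bddAbove hy)
      (isHermitian_iff_isSymm.mpr hA).isSelfAdjoint
  simpa [Algebra.algebraMap_eq_smul_one, sub_mulVec, smul_mulVec, dotProduct_sub,
    dotProduct_smul] using (le_iff.mp h).dotProduct_mulVec_nonneg x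

theorem IsSymm.spectrum_nonempty [Nonempty ι] (hA : A.IsSymm) : (spectrum ℝ A).Nonempty := by
  rw [(isHermitian_iff_isSymm.mpr hA).spectrum_real_eq_range_eigenvalues]
  exact Set.range_nonempty _

theorem IsSymm.sInf_spectrum_le_apply_self (hA : A.IsSymm) (i : ι) :
    sInf (spectrum ℝ A) ≤ A i i := by
  simpa using hA.sInf_spectrum_mul_le (Pi.single i 1)

theorem IsSymm.apply_self_le_sSup_spectrum (hA : A.IsSymm) (i : ι) :
    A i i ≤ sSup (spectrum ℝ A) := by
  simpa using hA.le_sSup_spectrum_mul (Pi.single i 1)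

end Spectrum

section Jacobi

variable [DecidableEq ι] {A : Matrix ι ι ℝ} {μ : ℝ}

theorem IsSymm.le_two_of_mem_spectrum_diagonal_inv_mul (hA : A.IsSymm)
    (hoff : ∀ i j, i ≠ j → A i j ≤ 0) (hrow : ∀ i, 0 ≤ ∑ j, A i j) (hdiag : ∀ i, 0 < A i i)
    (hμ : μ ∈ spectrum ℝ ((diagonal A.diag)⁻¹ * A)) : μ ≤ 2 := by
  obtain ⟨v, hv, hvAv⟩ :=
    exists_dotProduct_mulVec_eq_of_mem_spectrum_diagonal_inv_mul (fun i => (hdiag i).ne') hμ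
  have hupper := hA.dotProduct_mulVec_le_two_mul_sum_diag hoff hrow v
  rw [hvAv] at hupper
  exact le_of_mul_le_mul_right hupper (sum_mul_sq_pos hdiag hv)

theorem IsSymm.div_le_of_mem_spectrum_diagonal_inv_mul (hA : A.IsSymm)
    (hm : 0 < sInf (spectrum ℝ A)) (hμ : μ ∈ spectrum ℝ ((diagonal A.diag)⁻¹ * A)) :
    sInf (spectrum ℝ A) / sSup (spectrum ℝ A) ≤ μ := by
  set m := sInf (spectrum ℝ A)
  set M := sSup (spectrum ℝ A)
  have hdiag i : 0 < A i i := hm.trans_le (hA.sInf_spectrum_le_apply_self i)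
  obtain ⟨v, hv, hvAv⟩ :=
    exists_dotProduct_mulVec_eq_of_mem_spectrum_diagonal_inv_mul (fun i => (hdiag i).ne') hμ
  obtain ⟨k, -⟩ := Function.ne_iff.mp hv
  have hM : 0 < M := (hdiag k).trans_le (hA.apply_self_le_sSup_spectrum k)
  have hvv : 0 < v ⬝ᵥ v := by simpa using dotProduct_star_self_pos_iff.mpr hv
  have hq : 0 < ∑ i, A i i * v i ^ 2 := sum_mul_sq_pos hdiag hv
  have hlower : m * (v ⬝ᵥ v) ≤ μ * ∑ i, A i i * v i ^ 2 := hvAv ▸ hA.sInf_spectrum_mul_le v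
  have hweight : ∑ i, A i i * v i ^ 2 ≤ M * (v ⬝ᵥ v) := by
    simp only [dotProduct, mul_sum, ← sq]
    exact sum_le_sum fun i _ =>
      mul_le_mul_of_nonneg_right (hA.apply_self_le_sSup_spectrum i) (sq_nonneg _)
  have hμ0 : 0 < μ := pos_of_mul_pos_left ((mul_pos hm hvv).trans_le hlower) hq.le
  rw [div_le_iff₀ hM]
  refine le_of_mul_le_mul_right (hlower.trans ?_) hvv
  rw [mul_assoc]
  exact mul_le_mul_of_nonneg_left hweight hμ0.le

theorem IsSymm.le_sInf_spectrum [Nonempty ι] (hA : A.IsSymm) (hoff : ∀ i j, i ≠ j → A i j ≤ 0)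
    {s : ℝ} (hrow : ∀ i, s ≤ ∑ j, A i j) : s ≤ sInf (spectrum ℝ A) :=
  le_csInf hA.spectrum_nonempty fun _ =>
    le_of_mem_spectrum_of_forall_mul_dotProduct_self_le
      (hA.mul_dotProduct_self_le_dotProduct_mulVec hoff hrow)

theorem IsSymm.spectrum_diagonal_inv_mul_subset_Icc [Nonempty ι] (hA : A.IsSymm)
    (hoff : ∀ i j, i ≠ j → A i j ≤ 0) {s : ℝ} (hs : 0 < s) (hrow : ∀ i, s ≤ ∑ j, A i j) :
    spectrum ℝ ((diagonal A.diag)⁻¹ * A) ⊆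
      Set.Icc (sInf (spectrum ℝ A) / sSup (spectrum ℝ A)) 2 := by
  have hm := hs.trans_le (hA.le_sInf_spectrum hoff hrow)
  exact fun μ hμ => ⟨hA.div_le_of_mem_spectrum_diagonal_inv_mul hm hμ,
    hA.le_two_of_mem_spectrum_diagonal_inv_mul hoff (fun i => hs.le.trans (hrow i))
      (fun i => hm.trans_le (hA.sInf_spectrum_le_apply_self i)) hμ⟩

end Jacobi

section Stochastic

variable [DecidableEq ι] {P : Matrix ι ι ℝ} {t : ℝ}

theorem nonneg_of_one_sub_smul_mulVec_nonneg (hP : P ∈ rowStochastic ℝ ι) (ht0 : 0 ≤ t)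
    (ht1 : t < 1) {x : ι → ℝ} (hx : 0 ≤ (1 - t • P) *ᵥ x) : 0 ≤ x := by
  intro k
  have : Nonempty ι := ⟨k⟩
  obtain ⟨i, hi⟩ := Finite.exists_min x
  have hmean : x i ≤ ∑ j, P i j * x j :=
    calc x i = ∑ j, P i j * x i := by rw [← sum_mul, sum_row_of_mem_rowStochastic hP, one_mul]
      _ ≤ ∑ j, P i j * x j := sum_le_sum fun j _ => mul_le_mul_of_nonneg_left (hi j) (hP.1 i j)
  have hxi : 0 ≤ x i - t * ∑ j, P i j * x j := by
    have h := hx i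
    simp only [sub_mulVec, smul_mulVec, one_mulVec, Pi.sub_apply, Pi.smul_apply, smul_eq_mul,
      Pi.zero_apply] at h
    exact h
  have hmin : 0 ≤ x i := by nlinarith [mul_le_mul_of_nonneg_left hmean ht0]
  exact hmin.trans (hi k)

theorem isUnit_one_sub_smul (hP : P ∈ rowStochastic ℝ ι) (ht0 : 0 ≤ t) (ht1 : t < 1) :
    IsUnit (1 - t • P) := by
  refine mulVec_injective_iff_isUnit.mp fun x y hxy => ?_
  have hsub : (1 - t • P) *ᵥ (x - y) = 0 := by rw [mulVec_sub, hxy, sub_self]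
  have h₁ := nonneg_of_one_sub_smul_mulVec_nonneg hP ht0 ht1 hsub.ge
  have h₂ := nonneg_of_one_sub_smul_mulVec_nonneg hP ht0 ht1
    (x := y - x) (by rw [← neg_sub x y, mulVec_neg, hsub, neg_zero])
  exact le_antisymm (sub_nonneg.mp h₂) (sub_nonneg.mp h₁)

theorem inv_one_sub_smul_mulVec_nonneg (hP : P ∈ rowStochastic ℝ ι) (ht0 : 0 ≤ t) (ht1 : t < 1)
    {v : ι → ℝ} (hv : 0 ≤ v) : 0 ≤ (1 - t • P)⁻¹ *ᵥ v := by
  refine nonneg_of_one_sub_smul_mulVec_nonneg hP ht0 ht1 ?_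
  rwa [mulVec_mulVec, mul_nonsing_inv _ ((isUnit_one_sub_smul hP ht0 ht1).map detMonoidHom),
    one_mulVec]

theorem one_sub_smul_mulVec_one (hP : P ∈ rowStochastic ℝ ι) (t : ℝ) :
    (1 - t • P) *ᵥ 1 = (1 - t) • 1 := by
  rw [sub_mulVec, smul_mulVec, one_mulVec, one_vecMul_of_mem_rowStochastic hP, sub_smul, one_smul]

theorem inv_one_sub_smul_mulVec_one (hP : P ∈ rowStochastic ℝ ι) (ht0 : 0 ≤ t) (ht1 : t < 1) :
    (1 - t • P)⁻¹ *ᵥ 1 = (1 - t)⁻¹ • 1 := by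
  have hdet := (isUnit_one_sub_smul hP ht0 ht1).map detMonoidHom
  calc (1 - t • P)⁻¹ *ᵥ 1 = (1 - t)⁻¹ • ((1 - t • P)⁻¹ *ᵥ ((1 - t • P) *ᵥ 1)) := by
        rw [one_sub_smul_mulVec_one hP, mulVec_smul, smul_smul,
          inv_mul_cancel₀ (sub_ne_zero.mpr ht1.ne'), one_smul]
    _ = (1 - t)⁻¹ • 1 := by rw [mulVec_mulVec, nonsing_inv_mul _ hdet, one_mulVec]

end Stochastic

section TDOperator

variable [DecidableEq ι] {P : Matrix ι ι ℝ} {γ lam : ℝ}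

noncomputable def tdOperator (P : Matrix ι ι ℝ) (γ lam : ℝ) : Matrix ι ι ℝ :=
  (1 - (γ * lam) • P)⁻¹ * (1 - γ • P)

theorem tdOperator_eq (hP : P ∈ rowStochastic ℝ ι) (hγ0 : 0 ≤ γ) (hγ1 : γ < 1) (hl0 : 0 ≤ lam)
    (hl1 : lam ≤ 1) :
    tdOperator P γ lam = 1 - (γ - γ * lam) • ((1 - (γ * lam) • P)⁻¹ * P) := by
  have hunit := isUnit_one_sub_smul hP (mul_nonneg hγ0 hl0) (by nlinarith)
  have hsplit : 1 - γ • P = (1 - (γ * lam) • P) - (γ - γ * lam) • P := by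
    rw [sub_smul]
    abel
  rw [tdOperator, hsplit, mul_sub, Matrix.mul_smul, nonsing_inv_mul _ (hunit.map detMonoidHom)]

theorem tdOperator_apply_nonpos (hP : P ∈ rowStochastic ℝ ι) (hγ0 : 0 ≤ γ) (hγ1 : γ < 1)
    (hl0 : 0 ≤ lam) (hl1 : lam ≤ 1) (i j : ι) (hij : i ≠ j) : tdOperator P γ lam i j ≤ 0 := by
  have hBP : 0 ≤ ((1 - (γ * lam) • P)⁻¹ * P) i j :=
    inv_one_sub_smul_mulVec_nonneg hP (mul_nonneg hγ0 hl0) (by nlinarith)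
      (v := fun k => P k j) (fun k => hP.1 k j) i
  rw [tdOperator_eq hP hγ0 hγ1 hl0 hl1, sub_apply, one_apply_ne hij, smul_apply, smul_eq_mul,
    zero_sub, neg_nonpos]
  exact mul_nonneg (by nlinarith) hBP

theorem sum_tdOperator_apply (hP : P ∈ rowStochastic ℝ ι) (hγ0 : 0 ≤ γ) (hγ1 : γ < 1)
    (hl0 : 0 ≤ lam) (hl1 : lam ≤ 1) (i : ι) :
    ∑ j, tdOperator P γ lam i j = (1 - γ) / (1 - γ * lam) := by
  have h : tdOperator P γ lam *ᵥ 1 = ((1 - γ) / (1 - γ * lam)) • 1 := by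
    rw [tdOperator, ← mulVec_mulVec, one_sub_smul_mulVec_one hP, mulVec_smul,
      inv_one_sub_smul_mulVec_one hP (mul_nonneg hγ0 hl0) (by nlinarith), smul_smul, div_eq_mul_inv]
  simpa [mulVec, dotProduct] using congrFun h i

end TDOperator

end Matrix

/-- For a row-stochastic `P`, `γ ∈ [0,1)`, `λ ∈ [0,1]`,
`H_λ = (I - γλP)⁻¹(I - γP)`, `H̄_λ = diag(H_λ)`: if `H_λ` is symmetric, then
`κ(H̄_λ⁻¹H_λ) ≤ 2 κ(H_λ)`. -/
theorem stmt_17 {n : ℕ} (hn : 1 ≤ n) (P : Matrix (Fin n) (Fin n) ℝ)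
    (hP0 : ∀ i j, 0 ≤ P i j) (hP1 : ∀ i, ∑ j, P i j = 1)
    (γ : ℝ) (hγ0 : 0 ≤ γ) (hγ1 : γ < 1)
    (lam : ℝ) (hl0 : 0 ≤ lam) (hl1 : lam ≤ 1)
    (Hlam Hlambar : Matrix (Fin n) (Fin n) ℝ)
    (hH : Hlam = (1 - (γ * lam) • P)⁻¹ * (1 - γ • P))
    (hB : Hlambar = Matrix.diagonal (fun i => Hlam i i))
    (hsymm : Hlam.IsSymm) :
    maxEig (Hlambar⁻¹ * Hlam) / minEig (Hlambar⁻¹ * Hlam) ≤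
      2 * (maxEig Hlam / minEig Hlam) := by
  have hP : P ∈ rowStochastic ℝ (Fin n) := mem_rowStochastic_iff_sum.mpr ⟨hP0, hP1⟩
  have hHtd : Hlam = tdOperator P γ lam := hH
  have hs : 0 < (1 - γ) / (1 - γ * lam) := div_pos (by linarith) (by nlinarith)
  have hoff := hHtd ▸ tdOperator_apply_nonpos hP hγ0 hγ1 hl0 hl1
  have hrow i : (1 - γ) / (1 - γ * lam) ≤ ∑ j, Hlam i j :=
    (hHtd ▸ sum_tdOperator_apply hP hγ0 hγ1 hl0 hl1 i).ge
  have : Nonempty (Fin n) := ⟨⟨0, hn⟩⟩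
  have hm : 0 < sInf (spectrum ℝ Hlam) := hs.trans_le (hsymm.le_sInf_spectrum hoff hrow)
  have hM : sInf (spectrum ℝ Hlam) ≤ sSup (spectrum ℝ Hlam) :=
    (hsymm.sInf_spectrum_le_apply_self ⟨0, hn⟩).trans (hsymm.apply_self_le_sSup_spectrum _)
  subst hB
  simp only [maxEig, minEig, setOf_ofReal_mem_spectrum_map]
  calc _ ≤ 2 / (sInf (spectrum ℝ Hlam) / sSup (spectrum ℝ Hlam)) :=
        Real.sSup_div_sInf_le_div_of_subset_Icc (div_pos hm (hm.trans_le hM)) zero_le_two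
          (hsymm.spectrum_diagonal_inv_mul_subset_Icc hoff hs hrow)
    _ = 2 * (sSup (spectrum ℝ Hlam) / sInf (spectrum ℝ Hlam)) := by
        rw [div_div_eq_mul_div, mul_div_assoc]
end
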